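/- arXiv:2305.02060 — 6 statements merged into one kernel-verified Lean document; each statement's English description precedes it below -/
import Mathlib

section
/- Fix α ∈ ℝ, and let ε = ε_R be a positive function of R with ε_R·R → ∞ as R → ∞. Then, as R → ∞, S_α(ε,R) = Area(Sect_{α,ε}(R)) + O(R), with implied constant depending only on α. -/
open Filter Real

/-- `latticeS α ε R` is the number of integer lattice points `(m, n)` with `m ≥ 1`,
`m² + n² ≤ R²` and `|n - αm| < mε`, i.e. the number of lattice points in the sector
`Sect_{α,ε}(R)`. -/
noncomputable def latticeS (α ε R : ℝ) : ℕ :=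
  Set.ncard {x : ℤ × ℤ | 1 ≤ x.1 ∧ (x.1 : ℝ) ^ 2 + (x.2 : ℝ) ^ 2 ≤ R ^ 2 ∧
    |(x.2 : ℝ) - α * x.1| < x.1 * ε}

/-- The area of the sector `Sect_{α,ε}(R)`. -/
noncomputable def sectArea (α ε R : ℝ) : ℝ :=
  R ^ 2 / 2 * (Real.arctan (α + ε) - Real.arctan (α - ε))

open MeasureTheory
open scoped Classical

noncomputable def gg (R x : ℝ) : ℝ := Real.sqrt (R ^ 2 - x ^ 2)

noncomputable def phi (R β x : ℝ) : ℝ := min (max (β * x) (-(gg R x))) (gg R x)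

noncomputable def colT (α ε R : ℝ) (m : ℤ) : Finset ℤ :=
  (Finset.Icc (-(⌊R⌋₊ : ℤ)) (⌊R⌋₊ : ℤ)).filter
    (fun n : ℤ => ((m : ℝ)) ^ 2 + ((n : ℝ)) ^ 2 ≤ R ^ 2 ∧ |(n : ℝ) - α * (m : ℝ)| < (m : ℝ) * ε)

lemma gg_nonneg (R x : ℝ) : 0 ≤ gg R x := Real.sqrt_nonneg _

lemma gg_le (R x : ℝ) (hR : 0 ≤ R) : gg R x ≤ R := by
  have : R ^ 2 - x ^ 2 ≤ R ^ 2 := by nlinarith [sq_nonneg x]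
  calc gg R x ≤ Real.sqrt (R ^ 2) := Real.sqrt_le_sqrt this
  _ = R := by rw [Real.sqrt_sq hR]

lemma continuous_gg (R : ℝ) : Continuous (gg R) :=
  Real.continuous_sqrt.comp (by continuity)

lemma continuous_phi (R β : ℝ) : Continuous (phi R β) := by
  unfold phi
  exact Continuous.min (Continuous.max (by continuity) (continuous_gg R).neg) (continuous_gg R)

lemma gg_antitone (R : ℝ) : AntitoneOn (gg R) (Set.Ici 0) := by
  intro a ha b hb hab
  exact Real.sqrt_le_sqrt (by simp only [Set.mem_Ici] at ha hb; nlinarith)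

lemma abs_phi_le (R β x : ℝ) : |phi R β x| ≤ gg R x := by
  rw [abs_le]
  refine ⟨le_min (le_trans (le_refl _) (le_max_right _ _)) (neg_le_self (gg_nonneg R x)), min_le_right _ _⟩

lemma phi_eq_lin (R β x : ℝ) (hx : 0 ≤ x) (h : x * Real.sqrt (1 + β ^ 2) ≤ R) :
    phi R β x = β * x := by
  have h2 : (β * x) ^ 2 ≤ R ^ 2 - x ^ 2 := by
    have hs : Real.sqrt (1 + β ^ 2) ^ 2 = 1 + β ^ 2 := Real.sq_sqrt (by positivity)
    have hxs : (x * Real.sqrt (1 + β ^ 2)) ^ 2 ≤ R ^ 2 := by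
      have h0 : 0 ≤ x * Real.sqrt (1 + β ^ 2) := by positivity
      nlinarith
    nlinarith [hxs, hs]
  have habs : |β * x| ≤ gg R x := Real.abs_le_sqrt h2
  rw [abs_le] at habs
  unfold phi
  rw [max_eq_left (neg_le_of_neg_le (by linarith [habs.1])), min_eq_left habs.2]

lemma phi_eq_g (R β x : ℝ) (hβ : 0 ≤ β) (hx : 0 ≤ x) (hR : 0 ≤ R)
    (h : R ≤ x * Real.sqrt (1 + β ^ 2)) : phi R β x = gg R x := by
  have hg : gg R x ≤ β * x := by
    have hs : Real.sqrt (1 + β ^ 2) ^ 2 = 1 + β ^ 2 := Real.sq_sqrt (by positivity)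
    have : R ^ 2 - x ^ 2 ≤ (β * x) ^ 2 := by nlinarith [sq_nonneg (x * Real.sqrt (1 + β ^ 2))]
    calc gg R x ≤ Real.sqrt ((β * x) ^ 2) := Real.sqrt_le_sqrt this
    _ = β * x := Real.sqrt_sq (by positivity)
  unfold phi
  rw [max_eq_left (le_trans (neg_le_self (gg_nonneg R x)) hg), min_eq_right hg]

lemma phi_eq_neg_g (R β x : ℝ) (hβ : β ≤ 0) (hx : 0 ≤ x) (hR : 0 ≤ R)
    (h : R ≤ x * Real.sqrt (1 + β ^ 2)) : phi R β x = -gg R x := by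
  have hg : β * x ≤ -gg R x := by
    have hs : Real.sqrt (1 + β ^ 2) ^ 2 = 1 + β ^ 2 := Real.sq_sqrt (by positivity)
    have h2 : R ^ 2 - x ^ 2 ≤ (-(β * x)) ^ 2 := by
      nlinarith [sq_nonneg (x * Real.sqrt (1 + β ^ 2))]
    have : gg R x ≤ -(β * x) := by
      calc gg R x ≤ Real.sqrt ((-(β * x)) ^ 2) := Real.sqrt_le_sqrt h2
      _ = -(β * x) := Real.sqrt_sq (by nlinarith)
    linarith
  unfold phi
  rw [max_eq_right hg, min_eq_left (by linarith [gg_nonneg R x])]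

lemma phi_zero_fun (R x : ℝ) : phi R 0 x = 0 := by
  rw [phi, zero_mul, max_eq_left (neg_nonpos_of_nonneg (gg_nonneg R x)),
    min_eq_left (gg_nonneg R x)]

lemma integral_gg (R : ℝ) (hR : 0 < R) {s : ℝ} (h0 : 0 ≤ s) (hsR : s ≤ R) :
    ∫ x in s..R, gg R x
      = R ^ 2 * (π / 2) / 2 - (s * gg R s + R ^ 2 * Real.arcsin (s / R)) / 2 := by
  set H : ℝ → ℝ := fun x => (x * gg R x + R ^ 2 * Real.arcsin (x / R)) / 2 with hH
  have hcont : ContinuousOn H (Set.Icc s R) := by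
    apply Continuous.continuousOn
    exact (((continuous_id.mul (continuous_gg R)).add
      (continuous_const.mul (Real.continuous_arcsin.comp (continuous_id.div_const R)))).div_const 2)
  have hderiv : ∀ x ∈ Set.Ioo s R, HasDerivWithinAt H (gg R x) (Set.Ioi x) x := by
    intro x hx
    have hx0 : 0 ≤ x := le_trans h0 hx.1.le
    have hxR : x < R := hx.2
    have hpos : 0 < R ^ 2 - x ^ 2 := by nlinarith
    have hgpos : 0 < gg R x := Real.sqrt_pos.2 hpos
    have hgsq : gg R x ^ 2 = R ^ 2 - x ^ 2 := Real.sq_sqrt hpos.le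
    have hg' : HasDerivAt (gg R) (-x / gg R x) x := by
      have hinner : HasDerivAt (fun x : ℝ => R ^ 2 - x ^ 2) (-(2 * x)) x := by
        simpa using ((hasDerivAt_pow 2 x).const_sub (R ^ 2))
      have := (Real.hasDerivAt_sqrt hpos.ne').comp x hinner
      refine this.congr_deriv ?_
      simp only [gg] at hgpos ⊢
      field_simp
    have ha' : HasDerivAt (fun x : ℝ => Real.arcsin (x / R)) (1 / gg R x) x := by
      have hd : x / R ≠ -1 := by
        intro h; rw [div_eq_iff hR.ne'] at h; nlinarith
      have hd2 : x / R ≠ 1 := by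
        intro h; rw [div_eq_iff hR.ne'] at h; nlinarith
      have hinner : HasDerivAt (fun x : ℝ => x / R) (1 / R) x := by
        simpa using (hasDerivAt_id x).div_const R
      have := (Real.hasDerivAt_arcsin hd hd2).comp x hinner
      refine this.congr_deriv ?_
      have hq : Real.sqrt (1 - (x / R) ^ 2) = gg R x / R := by
        rw [show (1 : ℝ) - (x / R) ^ 2 = (R ^ 2 - x ^ 2) / R ^ 2 by field_simp]
        rw [Real.sqrt_div hpos.le, Real.sqrt_sq hR.le, gg]
      rw [hq]
      field_simp
    have : HasDerivAt H (gg R x) x := by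
      have h1 : HasDerivAt (fun y : ℝ => y * gg R y) (1 * gg R x + x * (-x / gg R x)) x :=
        (hasDerivAt_id x).mul hg'
      have h2 : HasDerivAt (fun y : ℝ => R ^ 2 * Real.arcsin (y / R)) (R ^ 2 * (1 / gg R x)) x :=
        ha'.const_mul _
      have := (h1.add h2).div_const 2
      refine this.congr_deriv ?_
      field_simp
      nlinarith [hgsq]
    exact this.hasDerivWithinAt
  have hint : IntervalIntegrable (gg R) volume s R := (continuous_gg R).intervalIntegrable _ _
  have := intervalIntegral.integral_eq_sub_of_hasDeriv_right_of_le hsR hcont hderiv hint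
  rw [this]
  have hgR : gg R R = 0 := by simp [gg]
  rw [hH]
  simp only [hgR, mul_zero, zero_add, div_self hR.ne', Real.arcsin_one]
  try ring

lemma sqrt_one_add_sq_pos (β : ℝ) : 0 < Real.sqrt (1 + β ^ 2) :=
  Real.sqrt_pos.2 (by positivity)

lemma one_le_sqrt_one_add_sq (β : ℝ) : 1 ≤ Real.sqrt (1 + β ^ 2) := by
  nlinarith [Real.sq_sqrt (show (0:ℝ) ≤ 1 + β ^ 2 by positivity), Real.sqrt_nonneg (1 + β ^ 2), sq_nonneg β]

lemma s_le_R (β R : ℝ) (hR : 0 < R) : R / Real.sqrt (1 + β ^ 2) ≤ R := by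
  rw [div_le_iff₀ (sqrt_one_add_sq_pos β)]
  nlinarith [one_le_sqrt_one_add_sq β]

lemma s_pos (β R : ℝ) (hR : 0 < R) : 0 < R / Real.sqrt (1 + β ^ 2) :=
  div_pos hR (sqrt_one_add_sq_pos β)

lemma s_mul (β R : ℝ) : R / Real.sqrt (1 + β ^ 2) * Real.sqrt (1 + β ^ 2) = R :=
  div_mul_cancel₀ _ (sqrt_one_add_sq_pos β).ne'

lemma gg_at_s (β R : ℝ) (hR : 0 < R) :
    gg R (R / Real.sqrt (1 + β ^ 2)) = |β| * (R / Real.sqrt (1 + β ^ 2)) := by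
  set s := R / Real.sqrt (1 + β ^ 2) with hs
  have hsq : s ^ 2 * (1 + β ^ 2) = R ^ 2 := by
    have := s_mul β R
    nlinarith [Real.sq_sqrt (show (0:ℝ) ≤ 1 + β ^ 2 by positivity)]
  have h1 : R ^ 2 - s ^ 2 = (|β| * s) ^ 2 := by
    have : |β| ^ 2 = β ^ 2 := sq_abs β
    nlinarith
  rw [gg, h1, Real.sqrt_sq (mul_nonneg (abs_nonneg β) (s_pos β R hR).le)]

lemma arcsin_inv_sqrt (β : ℝ) (hβ : 0 ≤ β) :
    Real.arcsin (1 / Real.sqrt (1 + β ^ 2)) = π / 2 - Real.arctan β := by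
  rw [← Real.cos_arctan β, ← Real.sin_pi_div_two_sub]
  have h0 : 0 ≤ Real.arctan β := by
    have := Real.arctan_strictMono.monotone hβ
    simpa [Real.arctan_zero] using this
  exact Real.arcsin_sin (by linarith [Real.arctan_lt_pi_div_two β, Real.pi_pos])
    (by linarith)

lemma integral_phi (β R : ℝ) (hR : 0 < R) :
    ∫ x in (0:ℝ)..R, phi R β x = R ^ 2 / 2 * Real.arctan β := by
  rcases eq_or_ne β 0 with rfl | hβ0
  · have : ∀ x, phi R 0 x = 0 := by
      intro x
      rw [phi, zero_mul, max_eq_left (neg_nonpos_of_nonneg (gg_nonneg R x)),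
        min_eq_left (gg_nonneg R x)]
    simp [this]
  set s := R / Real.sqrt (1 + β ^ 2) with hs
  have hs0 : 0 < s := s_pos β R hR
  have hsR : s ≤ R := s_le_R β R hR
  have hsplit : ∫ x in (0:ℝ)..R, phi R β x
      = (∫ x in (0:ℝ)..s, phi R β x) + ∫ x in s..R, phi R β x :=
    (intervalIntegral.integral_add_adjacent_intervals
      ((continuous_phi R β).intervalIntegrable _ _)
      ((continuous_phi R β).intervalIntegrable _ _)).symm
  have hlin : ∫ x in (0:ℝ)..s, phi R β x = β * s ^ 2 / 2 := by
    rw [intervalIntegral.integral_congr (g := fun x => β * x) ?_]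
    · rw [intervalIntegral.integral_const_mul, integral_id]
      ring
    · intro x hx
      rw [Set.uIcc_of_le hs0.le] at hx
      exact phi_eq_lin R β x hx.1 (by
        calc x * Real.sqrt (1 + β ^ 2) ≤ s * Real.sqrt (1 + β ^ 2) := by
              have := sqrt_one_add_sq_pos β
              nlinarith [hx.2]
        _ = R := s_mul β R)
  have hsdivR : s / R = 1 / Real.sqrt (1 + β ^ 2) := by
    rw [hs]
    field_simp
  have hggs : gg R s = |β| * s := gg_at_s β R hR
  have harcsin : Real.arcsin (s / R) = π / 2 - Real.arctan |β| := by
    rw [hsdivR, ← arcsin_inv_sqrt |β| (abs_nonneg β)]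
    congr 2
    rw [sq_abs]
  have hIg : ∫ x in s..R, gg R x = R ^ 2 / 2 * Real.arctan |β| - |β| * s ^ 2 / 2 := by
    rw [integral_gg R hR hs0.le hsR, hggs, harcsin]
    ring
  rcases le_or_gt 0 β with hβ | hβ
  · have hcong : ∫ x in s..R, phi R β x = ∫ x in s..R, gg R x := by
      apply intervalIntegral.integral_congr
      intro x hx
      rw [Set.uIcc_of_le hsR] at hx
      exact phi_eq_g R β x hβ (le_trans hs0.le hx.1) hR.le (by
        calc R = s * Real.sqrt (1 + β ^ 2) := (s_mul β R).symm
        _ ≤ x * Real.sqrt (1 + β ^ 2) := by nlinarith [sqrt_one_add_sq_pos β, hx.1])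
    rw [hsplit, hlin, hcong, hIg, abs_of_nonneg hβ]
    ring
  · have hcong : ∫ x in s..R, phi R β x = ∫ x in s..R, -gg R x := by
      apply intervalIntegral.integral_congr
      intro x hx
      rw [Set.uIcc_of_le hsR] at hx
      exact phi_eq_neg_g R β x hβ.le (le_trans hs0.le hx.1) hR.le (by
        calc R = s * Real.sqrt (1 + β ^ 2) := (s_mul β R).symm
        _ ≤ x * Real.sqrt (1 + β ^ 2) := by nlinarith [sqrt_one_add_sq_pos β, hx.1])
    rw [hsplit, hlin, hcong, intervalIntegral.integral_neg, hIg, abs_of_neg hβ,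
      Real.arctan_neg]
    ring

lemma aux_Ioc_zero (n : ℕ) : Finset.Ioc 0 n = Finset.Icc 1 n := by
  ext x; simp only [Finset.mem_Ioc, Finset.mem_Icc]; omega

lemma aux_Ioc_succ (a b : ℕ) : Finset.Ioc a b = Finset.Icc (a + 1) b := by
  ext x; simp only [Finset.mem_Ioc, Finset.mem_Icc]; omega

lemma gauss (n : ℕ) : (∑ m ∈ Finset.Icc 1 n, (m : ℝ)) = n * (n + 1) / 2 := by
  induction n with
  | zero => simp
  | succ k ih =>
    rw [← Finset.Ico_add_one_right_eq_Icc, Finset.sum_Ico_succ_top (by omega), Finset.Ico_add_one_right_eq_Icc, ih]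
    push_cast
    ring

lemma sum_shift (f : ℝ → ℝ) (a b : ℕ) :
    (∑ i ∈ Finset.Ico a b, f ((i : ℝ) + 1)) = ∑ m ∈ Finset.Icc (a + 1) b, f (m : ℝ) := by
  rw [← Finset.Ico_add_one_right_eq_Icc, Finset.sum_Ico_eq_sum_range, Finset.sum_Ico_eq_sum_range]
  have : b + 1 - (a + 1) = b - a := by omega
  rw [this]
  apply Finset.sum_congr rfl
  intro i _
  congr 1
  push_cast
  ring

lemma int_gg_bound (R : ℝ) (hR : 0 ≤ R) (a b : ℝ) :
    |∫ x in a..b, gg R x| ≤ R * |b - a| := by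
  have := intervalIntegral.norm_integral_le_of_norm_le_const
    (f := gg R) (C := R) (a := a) (b := b) (fun x _ => by
      rw [Real.norm_eq_abs, abs_of_nonneg (gg_nonneg R x)]; exact gg_le R x hR)
  simpa [Real.norm_eq_abs] using this

lemma sum_gg_close (R : ℝ) (hR : 1 ≤ R) {s : ℝ} (hs0 : 0 ≤ s) (hsR : s ≤ R) :
    |(∑ m ∈ Finset.Icc (⌊s⌋₊ + 1) ⌊R⌋₊, gg R (m : ℝ)) - ∫ x in s..R, gg R x| ≤ 2 * R := by
  have hR0 : (0:ℝ) ≤ R := by linarith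
  set K := ⌊s⌋₊ with hK
  set M := ⌊R⌋₊ with hM
  have hKM : K ≤ M := Nat.floor_mono hsR
  have hMR : (M : ℝ) ≤ R := Nat.floor_le hR0
  have hRM1 : R < M + 1 := Nat.lt_floor_add_one R
  have hKs : (K : ℝ) ≤ s := Nat.floor_le hs0
  have hsK1 : s < K + 1 := Nat.lt_floor_add_one s
  clear_value K M
  have hint : ∀ a b : ℝ, IntervalIntegrable (gg R) volume a b := fun a b =>
    (continuous_gg R).intervalIntegrable a b
  have hant : ∀ a b : ℕ, AntitoneOn (gg R) (Set.Icc (a:ℝ) b) := fun a b =>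
    (gg_antitone R).mono (fun x hx => le_trans (Nat.cast_nonneg a) hx.1)
  -- upper bound
  have h1 : (∑ m ∈ Finset.Icc (K + 1) M, gg R (m : ℝ)) ≤ ∫ x in (K:ℝ)..(M:ℝ), gg R x := by
    have := AntitoneOn.sum_le_integral_Ico hKM (hant K M)
    calc (∑ m ∈ Finset.Icc (K + 1) M, gg R (m : ℝ))
        = ∑ i ∈ Finset.Ico K M, gg R ((i : ℝ) + 1) := (sum_shift (gg R) K M).symm
      _ = ∑ i ∈ Finset.Ico K M, gg R ((i + 1 : ℕ) : ℝ) := by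
          apply Finset.sum_congr rfl; intro i _; congr 1; push_cast; ring
      _ ≤ ∫ x in (K:ℝ)..(M:ℝ), gg R x := this
  have h1' : ∫ x in (K:ℝ)..(M:ℝ), gg R x ≤ (∫ x in s..R, gg R x) + 2 * R := by
    have e : ∫ x in (K:ℝ)..(M:ℝ), gg R x
        = (∫ x in (K:ℝ)..s, gg R x) + ((∫ x in s..R, gg R x) + ∫ x in R..(M:ℝ), gg R x) := by
      rw [intervalIntegral.integral_add_adjacent_intervals (hint s R) (hint R M),
        intervalIntegral.integral_add_adjacent_intervals (hint (K:ℝ) s) (hint s M)]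
    have b1 : |∫ x in (K:ℝ)..s, gg R x| ≤ R := by
      refine le_trans (int_gg_bound R hR0 _ _) ?_
      have : |s - (K:ℝ)| ≤ 1 := by rw [abs_of_nonneg (by linarith)]; linarith
      nlinarith
    have b2 : |∫ x in R..(M:ℝ), gg R x| ≤ R := by
      refine le_trans (int_gg_bound R hR0 _ _) ?_
      have : |(M:ℝ) - R| ≤ 1 := by rw [abs_of_nonpos (by linarith), neg_sub]; linarith
      nlinarith
    rw [e]
    have := abs_le.1 b1
    have := abs_le.1 b2
    linarith
  -- lower bound
  have h2 : ∫ x in ((K:ℝ) + 1)..((M:ℝ) + 1), gg R x ≤ ∑ m ∈ Finset.Icc (K + 1) M, gg R (m : ℝ) := by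
    have := AntitoneOn.integral_le_sum_Ico (show K + 1 ≤ M + 1 by omega) (hant (K+1) (M+1))
    calc ∫ x in ((K:ℝ) + 1)..((M:ℝ) + 1), gg R x
        = ∫ x in (((K+1:ℕ)):ℝ)..(((M+1:ℕ)):ℝ), gg R x := by norm_num
      _ ≤ ∑ i ∈ Finset.Ico (K+1) (M+1), gg R (i : ℝ) := this
      _ = ∑ m ∈ Finset.Icc (K + 1) M, gg R (m : ℝ) := by rw [Finset.Ico_add_one_right_eq_Icc]
  have h2' : (∫ x in s..R, gg R x) - 2 * R ≤ ∫ x in ((K:ℝ) + 1)..((M:ℝ) + 1), gg R x := by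
    have e : ∫ x in ((K:ℝ) + 1)..((M:ℝ) + 1), gg R x
        = (∫ x in ((K:ℝ)+1)..s, gg R x) + ((∫ x in s..R, gg R x) + ∫ x in R..((M:ℝ)+1), gg R x) := by
      rw [intervalIntegral.integral_add_adjacent_intervals (hint s R) (hint R _),
        intervalIntegral.integral_add_adjacent_intervals (hint _ s) (hint s _)]
    have b1 : |∫ x in ((K:ℝ)+1)..s, gg R x| ≤ R := by
      refine le_trans (int_gg_bound R hR0 _ _) ?_
      have : |s - ((K:ℝ)+1)| ≤ 1 := by rw [abs_of_nonpos (by linarith)]; simp; linarith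
      nlinarith
    have b2 : |∫ x in R..((M:ℝ)+1), gg R x| ≤ R := by
      refine le_trans (int_gg_bound R hR0 _ _) ?_
      have : |((M:ℝ)+1) - R| ≤ 1 := by rw [abs_of_nonneg (by linarith)]; linarith
      nlinarith
    rw [e]
    have := abs_le.1 b1
    have := abs_le.1 b2
    linarith
  rw [abs_le]
  constructor
  · linarith
  · linarith

set_option maxHeartbeats 1600000 in
lemma sum_phi_close (β R : ℝ) (hR : 1 ≤ R) :
    |(∑ m ∈ Finset.Icc 1 ⌊R⌋₊, phi R β (m : ℝ)) - ∫ x in (0:ℝ)..R, phi R β x| ≤ 4 * R := by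
  have hR0 : (0:ℝ) < R := by linarith
  rcases eq_or_ne β 0 with rfl | hβ0
  · simp only [phi_zero_fun]
    simp
    linarith
  have hsmul := s_mul β R
  set s := R / Real.sqrt (1 + β ^ 2) with hs
  have hs0 : 0 < s := s_pos β R hR0
  have hsR : s ≤ R := s_le_R β R hR0
  set K := ⌊s⌋₊ with hK
  set M := ⌊R⌋₊ with hM
  have hKM : K ≤ M := Nat.floor_mono hsR
  have hKs : (K : ℝ) ≤ s := Nat.floor_le hs0.le
  have hsK1 : s < K + 1 := Nat.lt_floor_add_one s
  have hggclose := sum_gg_close R hR hs0.le hsR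
  rw [← hK, ← hM] at hggclose
  clear_value s K M
  clear hs hK hM
  have hβs : |β| * s ≤ R := by
    have habs : |β| ≤ Real.sqrt (1 + β ^ 2) := by
      rw [← Real.sqrt_sq_eq_abs]
      exact Real.sqrt_le_sqrt (by linarith)
    calc |β| * s ≤ Real.sqrt (1 + β ^ 2) * s := by nlinarith
    _ = R := by rw [mul_comm]; exact hsmul
  -- split the sum
  have hsum_split : (∑ m ∈ Finset.Icc 1 M, phi R β (m : ℝ))
      = (∑ m ∈ Finset.Icc 1 K, phi R β (m : ℝ)) + ∑ m ∈ Finset.Icc (K+1) M, phi R β (m : ℝ) := by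
    rw [← aux_Ioc_zero, ← aux_Ioc_zero, ← aux_Ioc_succ]
    exact (Finset.sum_Ioc_consecutive _ (by omega) hKM).symm
  -- split the integral
  have hint : ∀ a b : ℝ, IntervalIntegrable (phi R β) volume a b := fun a b =>
    (continuous_phi R β).intervalIntegrable a b
  have hint_split : ∫ x in (0:ℝ)..R, phi R β x
      = (∫ x in (0:ℝ)..s, phi R β x) + ∫ x in s..R, phi R β x :=
    (intervalIntegral.integral_add_adjacent_intervals (hint 0 s) (hint s R)).symm
  -- piece 1
  have hpA : (∑ m ∈ Finset.Icc 1 K, phi R β (m : ℝ)) = β * (K * (K + 1) / 2) := by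
    rw [Finset.sum_congr rfl (fun m hm => ?_), ← Finset.mul_sum, gauss]
    have hm' := Finset.mem_Icc.1 hm
    apply phi_eq_lin R β _ (Nat.cast_nonneg m)
    calc (m : ℝ) * Real.sqrt (1 + β ^ 2) ≤ s * Real.sqrt (1 + β ^ 2) := by
          have hms : (m:ℝ) ≤ s := le_trans (by exact_mod_cast Nat.cast_le.2 hm'.2) hKs
          nlinarith [sqrt_one_add_sq_pos β]
    _ = R := hsmul
  have hiA : ∫ x in (0:ℝ)..s, phi R β x = β * s ^ 2 / 2 := by
    rw [intervalIntegral.integral_congr (g := fun x => β * x) ?_]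
    · rw [intervalIntegral.integral_const_mul, integral_id]
      ring
    · intro x hx
      rw [Set.uIcc_of_le hs0.le] at hx
      exact phi_eq_lin R β x hx.1 (by
        calc x * Real.sqrt (1 + β ^ 2) ≤ s * Real.sqrt (1 + β ^ 2) := by
              nlinarith [sqrt_one_add_sq_pos β, hx.2]
        _ = R := hsmul)
  have hA : |(∑ m ∈ Finset.Icc 1 K, phi R β (m : ℝ)) - ∫ x in (0:ℝ)..s, phi R β x| ≤ 2 * R := by
    rw [hpA, hiA]
    rcases Nat.eq_zero_or_pos K with hK0 | hK1
    · rw [hK0]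
      have hs1 : s ≤ 1 := by rw [hK0] at hsK1; push_cast at hsK1; linarith
      push_cast
      have key : |β| * s * s ≤ R := by
        nlinarith [mul_le_mul_of_nonneg_right hβs hs0.le, abs_nonneg β]
      rw [abs_le]
      constructor <;>
        nlinarith [mul_nonneg (sub_nonneg.2 (le_abs_self β)) (mul_nonneg hs0.le hs0.le),
          mul_nonneg (sub_nonneg.2 (neg_abs_le β)) (mul_nonneg hs0.le hs0.le)]
    · have hK1' : (1:ℝ) ≤ K := by exact_mod_cast hK1
      have hdiff : |(K:ℝ) * (K + 1) - s ^ 2| ≤ 3 * s := by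
        rw [abs_le]
        constructor <;> nlinarith
      have : |β * ((K:ℝ) * (K+1)/2) - β * s ^ 2 / 2| = |β| * |(K:ℝ) * (K + 1) - s ^ 2| / 2 := by
        rw [show β * ((K:ℝ) * (K+1)/2) - β * s ^ 2 / 2 = β * ((K:ℝ) * (K+1) - s^2) / 2 by ring,
          abs_div, abs_mul]
        norm_num
      rw [this]
      have h3 : |β| * |(K:ℝ) * (K + 1) - s ^ 2| ≤ |β| * (3 * s) :=
        mul_le_mul_of_nonneg_left hdiff (abs_nonneg β)
      nlinarith
  -- piece 2
  have hB : |(∑ m ∈ Finset.Icc (K+1) M, phi R β (m : ℝ)) - ∫ x in s..R, phi R β x| ≤ 2 * R := by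
    have hxcond : ∀ x : ℝ, s ≤ x → R ≤ x * Real.sqrt (1 + β ^ 2) := by
      intro x hx
      calc R = s * Real.sqrt (1 + β ^ 2) := hsmul.symm
      _ ≤ x * Real.sqrt (1 + β ^ 2) := by nlinarith [sqrt_one_add_sq_pos β]
    have hmem : ∀ m ∈ Finset.Icc (K+1) M, s ≤ (m:ℝ) := by
      intro m hm
      have := (Finset.mem_Icc.1 hm).1
      have : ((K:ℝ)+1) ≤ m := by exact_mod_cast this
      linarith
    rcases le_or_gt 0 β with hβ | hβ
    · have e1 : (∑ m ∈ Finset.Icc (K+1) M, phi R β (m : ℝ))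
          = ∑ m ∈ Finset.Icc (K+1) M, gg R (m : ℝ) :=
        Finset.sum_congr rfl fun m hm => phi_eq_g R β _ hβ (Nat.cast_nonneg m) hR0.le
          (hxcond _ (hmem m hm))
      have e2 : ∫ x in s..R, phi R β x = ∫ x in s..R, gg R x := by
        apply intervalIntegral.integral_congr
        intro x hx
        rw [Set.uIcc_of_le hsR] at hx
        exact phi_eq_g R β x hβ (le_trans hs0.le hx.1) hR0.le (hxcond _ hx.1)
      rw [e1, e2]
      exact hggclose
    · have e1 : (∑ m ∈ Finset.Icc (K+1) M, phi R β (m : ℝ))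
          = -∑ m ∈ Finset.Icc (K+1) M, gg R (m : ℝ) := by
        rw [← Finset.sum_neg_distrib]
        exact Finset.sum_congr rfl fun m hm => phi_eq_neg_g R β _ hβ.le (Nat.cast_nonneg m) hR0.le
          (hxcond _ (hmem m hm))
      have e2 : ∫ x in s..R, phi R β x = -∫ x in s..R, gg R x := by
        rw [← intervalIntegral.integral_neg]
        apply intervalIntegral.integral_congr
        intro x hx
        rw [Set.uIcc_of_le hsR] at hx
        exact phi_eq_neg_g R β x hβ.le (le_trans hs0.le hx.1) hR0.le (hxcond _ hx.1)
      rw [e1, e2, show -(∑ m ∈ Finset.Icc (K+1) M, gg R (m : ℝ)) - -∫ x in s..R, gg R x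
        = -((∑ m ∈ Finset.Icc (K+1) M, gg R (m : ℝ)) - ∫ x in s..R, gg R x) by ring, abs_neg]
      exact hggclose
  calc |(∑ m ∈ Finset.Icc 1 M, phi R β (m : ℝ)) - ∫ x in (0:ℝ)..R, phi R β x|
      = |((∑ m ∈ Finset.Icc 1 K, phi R β (m : ℝ)) - ∫ x in (0:ℝ)..s, phi R β x)
        + ((∑ m ∈ Finset.Icc (K+1) M, phi R β (m : ℝ)) - ∫ x in s..R, phi R β x)| := by
        rw [hsum_split, hint_split]; ring_nf
    _ ≤ _ + _ := abs_add_le _ _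
    _ ≤ 2 * R + 2 * R := add_le_add hA hB
    _ = 4 * R := by ring

lemma int_le_natfloor {n : ℤ} {R : ℝ} (hR : 0 ≤ R) (h : (n : ℝ) ≤ R) : n ≤ (⌊R⌋₊ : ℤ) := by
  rw [Int.natCast_floor_eq_floor hR]
  exact Int.le_floor.2 h

lemma card_Icc_le (A D : ℝ) (h : A ≤ D) : ((Finset.Icc ⌈A⌉ ⌊D⌋).card : ℝ) ≤ D - A + 1 := by
  rw [Int.card_Icc]
  rcases le_or_gt 0 (⌊D⌋ + 1 - ⌈A⌉) with h1 | h1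
  · have : (((⌊D⌋ + 1 - ⌈A⌉).toNat : ℤ) : ℝ) = ((⌊D⌋ + 1 - ⌈A⌉ : ℤ) : ℝ) := by
      rw [Int.toNat_of_nonneg h1]
    push_cast at this ⊢
    rw [this]
    have := Int.floor_le D
    have := Int.le_ceil A
    linarith
  · rw [Int.toNat_of_nonpos h1.le]
    push_cast
    linarith

lemma card_Ioo_ge (A D : ℝ) : (D - A - 1 : ℝ) ≤ ((Finset.Ioo ⌊A⌋ ⌈D⌉).card : ℝ) := by
  rw [Int.card_Ioo]
  have h1 : ((⌈D⌉ - ⌊A⌋ - 1 : ℤ) : ℝ) ≤ (((⌈D⌉ - ⌊A⌋ - 1).toNat : ℤ) : ℝ) := by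
    exact_mod_cast Int.self_le_toNat _
  have := Int.le_ceil D
  have := Int.floor_le A
  push_cast at h1 ⊢
  linarith

lemma mem_colT (α ε R : ℝ) (hR : 0 ≤ R) (m n : ℤ) :
    n ∈ colT α ε R m ↔
      ((m : ℝ)) ^ 2 + ((n : ℝ)) ^ 2 ≤ R ^ 2 ∧ |(n : ℝ) - α * (m : ℝ)| < (m : ℝ) * ε := by
  rw [colT, Finset.mem_filter]
  constructor
  · exact fun h => h.2
  · intro h
    refine ⟨Finset.mem_Icc.2 ⟨?_, ?_⟩, h⟩
    · have hb : ((-n : ℤ) : ℝ) ≤ R := by push_cast; nlinarith [h.1, sq_nonneg ((m:ℝ))]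
      have := int_le_natfloor hR hb
      omega
    · have hb : ((n : ℤ) : ℝ) ≤ R := by nlinarith [h.1, sq_nonneg ((m:ℝ))]
      exact int_le_natfloor hR hb

lemma col_count (α ε R : ℝ) (hε : 0 < ε) (hR : 1 ≤ R) {m : ℤ} (hm1 : 1 ≤ m) (hmR : (m : ℝ) ≤ R) :
    |((colT α ε R m).card : ℝ) - (phi R (α + ε) (m : ℝ) - phi R (α - ε) (m : ℝ))| ≤ 1 := by
  have hR0 : (0 : ℝ) ≤ R := by linarith
  have hm0 : (0 : ℝ) ≤ (m : ℝ) := by exact_mod_cast (by omega : (0:ℤ) ≤ m)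
  set g := gg R (m : ℝ) with hg
  have hg0 : 0 ≤ g := gg_nonneg R _
  have hgsq : g ^ 2 = R ^ 2 - (m : ℝ) ^ 2 := by
    rw [hg, gg, Real.sq_sqrt]
    nlinarith
  set c := (α - ε) * (m : ℝ) with hc
  set d := (α + ε) * (m : ℝ) with hd
  have hm0' : (0 : ℝ) < (m : ℝ) := by exact_mod_cast hm1
  have hcd : c < d := by rw [hc, hd]; nlinarith
  set A := max c (-g) with hA
  set D := min d g with hD
  have hmem : ∀ n : ℤ, n ∈ colT α ε R m ↔ ((-g ≤ (n:ℝ) ∧ (n:ℝ) ≤ g) ∧ (c < n ∧ (n:ℝ) < d)) := by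
    intro n
    rw [mem_colT α ε R hR0]
    constructor
    · rintro ⟨h1, h2⟩
      have hng : |(n : ℝ)| ≤ g := by
        rw [hg, gg]
        apply Real.abs_le_sqrt
        nlinarith
      rw [abs_le] at hng
      rw [abs_lt] at h2
      exact ⟨⟨hng.1, hng.2⟩, by constructor <;> [rw [hc]; rw [hd]] <;> nlinarith [h2.1, h2.2]⟩
    · rintro ⟨⟨h1, h2⟩, h3, h4⟩
      constructor
      · nlinarith
      · rw [abs_lt]
        rw [hc] at h3; rw [hd] at h4
        constructor <;> nlinarith
  -- subset relations
  have hsub1 : colT α ε R m ⊆ Finset.Icc ⌈A⌉ ⌊D⌋ := by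
    intro n hn
    rw [hmem n] at hn
    rw [Finset.mem_Icc]
    constructor
    · apply Int.ceil_le.2
      exact max_le hn.2.1.le hn.1.1
    · apply Int.le_floor.2
      exact le_min hn.2.2.le hn.1.2
  have hsub2 : Finset.Ioo ⌊A⌋ ⌈D⌉ ⊆ colT α ε R m := by
    intro n hn
    rw [Finset.mem_Ioo] at hn
    have hAn : A < (n : ℝ) := by
      have := Int.floor_lt.1 hn.1
      exact this
    have hnD : (n : ℝ) < D := Int.lt_ceil.1 hn.2
    rw [hmem n]
    refine ⟨⟨?_, ?_⟩, ?_, ?_⟩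
    · linarith [le_max_right c (-g), hAn]
    · linarith [min_le_right d g, hnD]
    · linarith [le_max_left c (-g), hAn]
    · linarith [min_le_left d g, hnD]
  rcases le_or_gt A D with hAD | hAD
  · have hphid : phi R (α + ε) (m : ℝ) = D := by
      have hdg : -g ≤ d := by
        have h1 : -g ≤ A := le_max_right c (-g)
        have h2 : D ≤ d := min_le_left d g
        linarith
      rw [phi, ← hg, ← hd, max_eq_left hdg]
    have hphic : phi R (α - ε) (m : ℝ) = A := by
      have hAg : A ≤ g := hAD.trans (min_le_right d g)
      rw [phi, ← hg, ← hc, ← hA, min_eq_left hAg]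
    rw [hphid, hphic]
    have hub : ((colT α ε R m).card : ℝ) ≤ D - A + 1 := by
      calc ((colT α ε R m).card : ℝ) ≤ ((Finset.Icc ⌈A⌉ ⌊D⌋).card : ℝ) := by
            exact_mod_cast Finset.card_le_card hsub1
      _ ≤ D - A + 1 := card_Icc_le A D hAD
    have hlb : D - A - 1 ≤ ((colT α ε R m).card : ℝ) := by
      calc (D - A - 1 : ℝ) ≤ ((Finset.Ioo ⌊A⌋ ⌈D⌉).card : ℝ) := card_Ioo_ge A D
      _ ≤ ((colT α ε R m).card : ℝ) := by exact_mod_cast Finset.card_le_card hsub2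
    rw [abs_le]
    constructor <;> linarith
  · -- empty case
    have hempty : colT α ε R m = ∅ := by
      apply Finset.eq_empty_of_forall_notMem
      intro n hn
      rw [hmem n] at hn
      have h1 : A ≤ (n : ℝ) := by
        apply max_le hn.2.1.le hn.1.1
      have h2 : (n : ℝ) ≤ D := le_min hn.2.2.le hn.1.2
      linarith
    have hdiff : phi R (α + ε) (m : ℝ) = phi R (α - ε) (m : ℝ) := by
      rcases min_cases d g with ⟨hD1, _⟩ | ⟨hD1, hDg⟩ <;> rcases max_cases c (-g) with ⟨hA1, _⟩ | ⟨hA1, hAc⟩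
      · -- D = d, A = c : d < c contradiction
        exfalso
        rw [hD, hD1, hA, hA1] at hAD
        linarith
      · -- D = d, A = -g : d < -g
        rw [hD, hD1, hA, hA1] at hAD
        rw [phi, phi, ← hg, ← hc, ← hd]
        rw [max_eq_right (le_of_lt hAD), max_eq_right (by linarith)]
      · -- D = g, A = c : g < c
        rw [hD, hD1, hA, hA1] at hAD
        rw [phi, phi, ← hg, ← hc, ← hd]
        rw [max_eq_left (by linarith), max_eq_left (by linarith),
          min_eq_right (by linarith), min_eq_right (by linarith)]
      · -- D = g, A = -g : g < -g contradiction
        exfalso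
        rw [hD, hD1, hA, hA1] at hAD
        linarith
    rw [hempty, hdiff]
    simp

lemma sum_int_nat (M : ℕ) (f : ℝ → ℝ) :
    ∑ m ∈ Finset.Icc (1:ℤ) (M:ℤ), f (m:ℝ) = ∑ m ∈ Finset.Icc (1:ℕ) M, f (m:ℝ) := by
  apply Finset.sum_bij' (i := fun (m : ℤ) (_ : m ∈ Finset.Icc (1:ℤ) (M:ℤ)) => m.toNat)
    (j := fun (n : ℕ) (_ : n ∈ Finset.Icc (1:ℕ) M) => (n : ℤ))
  · intro a ha
    simp only [Finset.mem_Icc] at ha ⊢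
    omega
  · intro a ha
    simp only [Finset.mem_Icc] at ha ⊢
    omega
  · intro a ha
    simp only [Finset.mem_Icc] at ha
    omega
  · intro a _
    simp
  · intro a ha
    simp only [Finset.mem_Icc] at ha
    congr 1
    have : ((a.toNat : ℤ) : ℝ) = (a : ℝ) := by
      rw [Int.toNat_of_nonneg (by omega)]
    exact_mod_cast this.symm

lemma latticeS_eq (α ε R : ℝ) (hR : 1 ≤ R) :
    (latticeS α ε R : ℝ)
      = ∑ m ∈ Finset.Icc (1:ℤ) ((⌊R⌋₊ : ℕ):ℤ), ((colT α ε R m).card : ℝ) := by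
  have hR0 : (0:ℝ) ≤ R := by linarith
  set M := ⌊R⌋₊ with hM
  set F : Finset (ℤ × ℤ) := (Finset.Icc (1:ℤ) (M:ℤ) ×ˢ Finset.Icc (-(M:ℤ)) (M:ℤ)).filter
    (fun x => 1 ≤ x.1 ∧ (x.1 : ℝ) ^ 2 + (x.2 : ℝ) ^ 2 ≤ R ^ 2 ∧
      |(x.2 : ℝ) - α * x.1| < x.1 * ε) with hF
  have hset : {x : ℤ × ℤ | 1 ≤ x.1 ∧ (x.1 : ℝ) ^ 2 + (x.2 : ℝ) ^ 2 ≤ R ^ 2 ∧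
      |(x.2 : ℝ) - α * x.1| < x.1 * ε} = ↑F := by
    ext x
    simp only [hF, Set.mem_setOf_eq, Finset.coe_filter, Finset.mem_coe, Finset.mem_product,
      Finset.mem_Icc, Set.mem_setOf_eq]
    constructor
    · rintro ⟨h1, h2, h3⟩
      have hx1 : (1:ℝ) ≤ (x.1 : ℝ) := by exact_mod_cast h1
      have hx1R : (x.1 : ℝ) ≤ R := by nlinarith [sq_nonneg (x.2 : ℝ)]
      have hx2R : (x.2 : ℝ) ≤ R := by nlinarith [sq_nonneg (x.1 : ℝ)]
      have hx2R' : ((-x.2 : ℤ) : ℝ) ≤ R := by push_cast; nlinarith [sq_nonneg (x.1 : ℝ)]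
      have b1 := int_le_natfloor hR0 hx1R
      have b2 := int_le_natfloor hR0 hx2R
      have b3 := int_le_natfloor hR0 hx2R'
      exact ⟨⟨⟨h1, b1⟩, by omega⟩, h1, h2, h3⟩
    · rintro ⟨_, h⟩
      exact h
  have hcard : latticeS α ε R = F.card := by
    rw [latticeS, hset, Set.ncard_coe_finset]
  have hfiber : F.card = ∑ m ∈ Finset.Icc (1:ℤ) (M:ℤ), (F.filter (fun x => x.1 = m)).card := by
    apply Finset.card_eq_sum_card_fiberwise
    intro x hx
    rw [hF, Finset.mem_coe, Finset.mem_filter, Finset.mem_product] at hx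
    exact Finset.mem_coe.2 hx.1.1
  have hcol : ∀ m ∈ Finset.Icc (1:ℤ) (M:ℤ),
      (F.filter (fun x => x.1 = m)).card = (colT α ε R m).card := by
    intro m hm
    rw [Finset.mem_Icc] at hm
    refine Finset.card_bij' (fun x _ => x.2) (fun n _ => ((m : ℤ), n)) ?_ ?_ ?_ ?_
    · intro x hx
      rw [Finset.mem_filter] at hx
      obtain ⟨hxF, hx1⟩ := hx
      rw [hF, Finset.mem_filter, Finset.mem_product] at hxF
      rw [colT, Finset.mem_filter]
      subst hx1
      exact ⟨hxF.1.2, hxF.2.2.1, hxF.2.2.2⟩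
    · intro n hn
      rw [colT, Finset.mem_filter] at hn
      rw [Finset.mem_filter, hF, Finset.mem_filter, Finset.mem_product]
      exact ⟨⟨⟨Finset.mem_Icc.2 hm, hn.1⟩, hm.1, hn.2.1, hn.2.2⟩, rfl⟩
    · intro x hx
      rw [Finset.mem_filter] at hx
      obtain ⟨x1, x2⟩ := x
      simp only [Prod.mk.injEq]
      exact ⟨hx.2.symm, trivial⟩
    · intro n _
      rfl
  rw [hcard, hfiber]
  push_cast
  exact Finset.sum_congr rfl (fun m hm => by rw [hcol m hm])

lemma count_close (α ε R : ℝ) (hε : 0 < ε) (hR : 1 ≤ R) :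
    |(latticeS α ε R : ℝ) - ∑ m ∈ Finset.Icc 1 ⌊R⌋₊,
        (phi R (α + ε) (m : ℝ) - phi R (α - ε) (m : ℝ))| ≤ R := by
  have hR0 : (0:ℝ) ≤ R := by linarith
  set M := ⌊R⌋₊ with hM
  have hMR : (M : ℝ) ≤ R := Nat.floor_le hR0
  rw [latticeS_eq α ε R hR,
    ← sum_int_nat M (fun x => phi R (α + ε) x - phi R (α - ε) x), ← Finset.sum_sub_distrib]
  calc |∑ m ∈ Finset.Icc (1:ℤ) (M:ℤ),
        (((colT α ε R m).card : ℝ) - (phi R (α + ε) (m:ℝ) - phi R (α - ε) (m:ℝ)))|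
      ≤ ∑ m ∈ Finset.Icc (1:ℤ) (M:ℤ),
        |((colT α ε R m).card : ℝ) - (phi R (α + ε) (m:ℝ) - phi R (α - ε) (m:ℝ))| :=
        Finset.abs_sum_le_sum_abs _ _
    _ ≤ ∑ m ∈ Finset.Icc (1:ℤ) (M:ℤ), (1:ℝ) := by
        apply Finset.sum_le_sum
        intro m hm
        rw [Finset.mem_Icc] at hm
        have hm1 : 1 ≤ m := hm.1
        have hmR : (m : ℝ) ≤ R := by
          have : (m : ℝ) ≤ (M : ℝ) := by exact_mod_cast hm.2
          linarith
        exact col_count α ε R hε hR hm1 hmR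
    _ = ((Finset.Icc (1:ℤ) (M:ℤ)).card : ℝ) := by rw [Finset.sum_const]; simp
    _ ≤ R := by
        rw [Int.card_Icc]
        have : ((M:ℤ) + 1 - 1).toNat = M := by omega
        rw [this]
        exact hMR

/-- Fix `α ∈ ℝ`, and let `ε = ε_R` be a positive function of `R` with `ε_R · R → ∞`
as `R → ∞`. Then `S_α(ε, R) = Area(Sect_{α,ε}(R)) + O(R)`. -/
theorem slow_sectors (α : ℝ) (ε : ℝ → ℝ) (hεpos : ∀ R, 0 < ε R)
    (hεR : Tendsto (fun R => ε R * R) atTop atTop) :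
    (fun R => (latticeS α (ε R) R : ℝ) - sectArea α (ε R) R) =O[atTop] fun R => R := by
  rw [Asymptotics.isBigO_iff]
  refine ⟨10, ?_⟩
  filter_upwards [eventually_ge_atTop (1 : ℝ)] with R hR
  have hR0 : (0 : ℝ) < R := lt_of_lt_of_le one_pos hR
  have hε := hεpos R
  have harea : sectArea α (ε R) R
      = (∫ x in (0:ℝ)..R, phi R (α + ε R) x) - ∫ x in (0:ℝ)..R, phi R (α - ε R) x := by
    rw [integral_phi (α + ε R) R hR0, integral_phi (α - ε R) R hR0, sectArea]
    ring
  have h1 := count_close α (ε R) R hε hR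
  have h2 := sum_phi_close (α + ε R) R hR
  have h3 := sum_phi_close (α - ε R) R hR
  have hsplit : (∑ m ∈ Finset.Icc 1 ⌊R⌋₊, (phi R (α + ε R) (m:ℝ) - phi R (α - ε R) (m:ℝ)))
      = (∑ m ∈ Finset.Icc 1 ⌊R⌋₊, phi R (α + ε R) (m:ℝ))
        - ∑ m ∈ Finset.Icc 1 ⌊R⌋₊, phi R (α - ε R) (m:ℝ) := Finset.sum_sub_distrib _ _
  have key : (latticeS α (ε R) R : ℝ) - sectArea α (ε R) R
      = ((latticeS α (ε R) R : ℝ)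
          - ∑ m ∈ Finset.Icc 1 ⌊R⌋₊, (phi R (α + ε R) (m:ℝ) - phi R (α - ε R) (m:ℝ)))
        + (((∑ m ∈ Finset.Icc 1 ⌊R⌋₊, phi R (α + ε R) (m:ℝ))
            - ∫ x in (0:ℝ)..R, phi R (α + ε R) x)
          - ((∑ m ∈ Finset.Icc 1 ⌊R⌋₊, phi R (α - ε R) (m:ℝ))
            - ∫ x in (0:ℝ)..R, phi R (α - ε R) x)) := by
    rw [harea, hsplit]
    ring
  rw [Real.norm_eq_abs, Real.norm_eq_abs, key]
  have habs := abs_le.1 h1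
  have habs2 := abs_le.1 h2
  have habs3 := abs_le.1 h3
  rw [abs_of_pos hR0]
  rw [abs_le]
  constructor <;> linarith
end

section
/- Fix α = p/q ∈ ℚ with q > 0 and gcd(p,q) = 1, and let ε = ε_R be a positive function of R with ε_R → 0 and ε_R·R → ∞ as R → ∞. Then, as R → ∞, S_α(ε,R) = Area(Sect_{α,ε}(R)) + β/ε + O(ε² R²), where β := (1/q²)·{ε q² R/√(p²+q²)}·(1 − {ε q² R/√(p²+q²)}) is a bounded function of R and {x} denotes the fractional part of x; the implied constant depends only on p and q. -/
set_option maxHeartbeats 1000000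

open Filter Real Finset

lemma ap_count (q a b c : ℤ) (hq : 0 < q) :
    (((Finset.Ioc a b).filter (fun m => q ∣ (m - c))).card : ℤ)
      = max ((b - c) / q - (a - c) / q) 0 := by
  classical
  have key : (Finset.Ioc a b).filter (fun m => q ∣ (m - c))
      = (Finset.Ioc ((a - c)/q) ((b - c)/q)).image (fun t => q * t + c) := by
    ext m
    simp only [mem_filter, mem_Ioc, mem_image]
    constructor
    · rintro ⟨⟨ham, hmb⟩, d, hd⟩
      refine ⟨d, ⟨?_, ?_⟩, by omega⟩
      · by_contra hcon
        push_neg at hcon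
        have := (Int.le_ediv_iff_mul_le hq).mp hcon
        nlinarith
      · exact (Int.le_ediv_iff_mul_le hq).mpr (by nlinarith)
    · rintro ⟨t, ⟨hat, htb⟩, rfl⟩
      have h1 : a - c < ((a-c)/q + 1) * q := Int.lt_ediv_add_one_mul_self _ hq
      have h1' : ((a-c)/q + 1) * q ≤ t * q :=
        mul_le_mul_of_nonneg_right (by omega) (le_of_lt hq)
      have h2 := (Int.le_ediv_iff_mul_le hq).mp htb
      refine ⟨⟨by nlinarith, by nlinarith⟩, ⟨t, by ring⟩⟩
  rw [key, Finset.card_image_of_injective _ (fun x y h => by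
    have : q * x = q * y := by omega
    exact mul_left_cancel₀ (ne_of_gt hq) this), Int.card_Ioc]
  omega


lemma fract_half (x : ℝ) (n : ℤ) : |Int.fract x - 1/2| ≤ |x - (n + 1/2)| := by
  have h1 : (⌊x⌋ : ℝ) ≤ x := Int.floor_le x
  have h2 : x < ⌊x⌋ + 1 := Int.lt_floor_add_one x
  have hf : Int.fract x = x - ⌊x⌋ := rfl
  have hb : |Int.fract x - 1/2| ≤ 1/2 :=
    abs_le.mpr ⟨by linarith [Int.fract_nonneg x], by linarith [Int.fract_lt_one x]⟩
  rcases (by omega : n ≤ ⌊x⌋ - 1 ∨ n = ⌊x⌋ ∨ ⌊x⌋ + 1 ≤ n) with h | h | h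
  · have h' : (n : ℝ) ≤ (⌊x⌋ : ℝ) - 1 := by exact_mod_cast h
    have : (1:ℝ)/2 ≤ x - (n + 1/2) := by linarith
    linarith [le_abs_self (x - ((n:ℝ) + 1/2))]
  · subst h
    apply le_of_eq
    congr 1
    rw [hf]; ring
  · have h' : (⌊x⌋ : ℝ) + 1 ≤ (n : ℝ) := by exact_mod_cast h
    have : (1:ℝ)/2 ≤ ((n:ℝ) + 1/2) - x := by linarith
    linarith [neg_abs_le (x - ((n:ℝ) + 1/2))]

lemma g_lip (x y : ℝ) :
    |Int.fract x * (1 - Int.fract x) - Int.fract y * (1 - Int.fract y)| ≤ |x - y| := by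
  set Dx := |Int.fract x - 1/2| with hDx
  set Dy := |Int.fract y - 1/2| with hDy
  have hbx : Dx ≤ 1/2 :=
    abs_le.mpr ⟨by linarith [Int.fract_nonneg x], by linarith [Int.fract_lt_one x]⟩
  have hby : Dy ≤ 1/2 :=
    abs_le.mpr ⟨by linarith [Int.fract_nonneg y], by linarith [Int.fract_lt_one y]⟩
  have hfy : Int.fract y = y - ⌊y⌋ := rfl
  have hfx : Int.fract x = x - ⌊x⌋ := rfl
  have hx : Dx ≤ |x - y| + Dy := by
    calc Dx ≤ |x - ((⌊y⌋ : ℝ) + 1/2)| := fract_half x ⌊y⌋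
    _ = |(x - y) + (y - ((⌊y⌋:ℝ) + 1/2))| := by ring_nf
    _ ≤ |x - y| + |y - ((⌊y⌋:ℝ) + 1/2)| := abs_add_le _ _
    _ = |x - y| + Dy := by rw [hDy, hfy]; ring_nf
  have hy : Dy ≤ |x - y| + Dx := by
    calc Dy ≤ |y - ((⌊x⌋ : ℝ) + 1/2)| := fract_half y ⌊x⌋
    _ = |(y - x) + (x - ((⌊x⌋:ℝ) + 1/2))| := by ring_nf
    _ ≤ |y - x| + |x - ((⌊x⌋:ℝ) + 1/2)| := abs_add_le _ _
    _ = |x - y| + Dx := by rw [hDx, hfx, abs_sub_comm]; ring_nf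
  have e1 : Int.fract x * (1 - Int.fract x) = 1/4 - Dx^2 := by rw [hDx, sq_abs]; ring
  have e2 : Int.fract y * (1 - Int.fract y) = 1/4 - Dy^2 := by rw [hDy, sq_abs]; ring
  rw [e1, e2]
  have h3 : |Dy - Dx| ≤ |x - y| := abs_le.mpr ⟨by linarith, by linarith⟩
  calc |1/4 - Dx^2 - (1/4 - Dy^2)| = |Dy - Dx| * |Dy + Dx| := by
        rw [← abs_mul]; ring_nf
    _ ≤ |x - y| * 1 := by
        apply mul_le_mul h3 ?_ (abs_nonneg _) (abs_nonneg _)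
        rw [abs_of_nonneg (by positivity)]
        linarith
    _ = |x - y| := mul_one _


lemma sum_abs_Icc (K : ℤ) (hK : 0 ≤ K) :
    ∑ k ∈ Finset.Icc (-K) K, |k| = K * (K + 1) := by
  obtain ⟨N, rfl⟩ := Int.eq_ofNat_of_zero_le hK
  induction N with
  | zero => simp
  | succ n ih =>
    have hins : Finset.Icc (-((n+1 : ℕ) : ℤ)) ((n+1 : ℕ) : ℤ)
        = insert (-((n:ℤ)+1)) (insert ((n:ℤ)+1) (Finset.Icc (-(n:ℤ)) (n:ℤ))) := by
      ext k; simp; omega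
    rw [hins, Finset.sum_insert (by simp; omega), Finset.sum_insert (by simp), ih (by positivity)]
    rw [abs_of_nonpos (by omega), abs_of_nonneg (by omega)]
    push_cast
    ring

lemma le_of_sq_le' (a b : ℝ) (h : a^2 ≤ b^2) (hb : 0 ≤ b) : a ≤ b := by nlinarith

lemma finite_boxed (P : Set (ℤ×ℤ)) (B : ℝ) (h : ∀ x ∈ P, |((x.1:ℤ):ℝ)| ≤ B ∧ |((x.2:ℤ):ℝ)| ≤ B) :
    P.Finite := by
  apply Set.Finite.subset (Set.finite_Icc (⟨-⌈B⌉, -⌈B⌉⟩ : ℤ×ℤ) ⟨⌈B⌉,⌈B⌉⟩)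
  intro x hx
  obtain ⟨h1, h2⟩ := h x hx
  rw [abs_le] at h1 h2
  have c1 : (x.1:ℝ) ≤ (⌈B⌉:ℝ) := h1.2.trans (Int.le_ceil B)
  have c2 : (x.2:ℝ) ≤ (⌈B⌉:ℝ) := h2.2.trans (Int.le_ceil B)
  have c3 : (-(⌈B⌉:ℤ):ℝ) ≤ (x.1:ℝ) := by push_cast; linarith [h1.1, Int.le_ceil B]
  have c4 : (-(⌈B⌉:ℤ):ℝ) ≤ (x.2:ℝ) := by push_cast; linarith [h2.1, Int.le_ceil B]
  simp only [Set.mem_Icc, Prod.le_def]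
  exact ⟨⟨by exact_mod_cast c3, by exact_mod_cast c4⟩,
    ⟨by exact_mod_cast c1, by exact_mod_cast c2⟩⟩

lemma area_est (α e : ℝ) (he : 0 < e) :
    |(Real.arctan (α + e) - Real.arctan (α - e)) - 2*e/(1+α^2)| ≤ 2*e*e := by
  have hc1 : Continuous (fun t : ℝ => 1/(1+t^2)) :=
    continuous_const.div (by continuity) (fun x => by positivity)
  have hint : (∫ t in (α - e)..(α + e), (1/(1+t^2) - 1/(1+α^2)))
      = (Real.arctan (α + e) - Real.arctan (α - e)) - 2*e/(1+α^2) := by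
    rw [intervalIntegral.integral_sub (hc1.intervalIntegrable _ _) intervalIntegrable_const]
    rw [integral_one_div_one_add_sq, intervalIntegral.integral_const, smul_eq_mul]
    ring
  have hbound : ∀ t ∈ Set.uIoc (α - e) (α + e), ‖1/(1+t^2) - 1/(1+α^2)‖ ≤ e := by
    intro t ht
    rw [Set.uIoc_of_le (by linarith)] at ht
    obtain ⟨ht1, ht2⟩ := ht
    have h1 : (0:ℝ) < 1 + t^2 := by positivity
    have h2 : (0:ℝ) < 1 + α^2 := by positivity
    have key : 1/(1+t^2) - 1/(1+α^2) = (α^2 - t^2)/((1+t^2)*(1+α^2)) := by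
      field_simp
      ring
    rw [Real.norm_eq_abs, key, abs_div, abs_of_pos (by positivity : (0:ℝ) < (1+t^2)*(1+α^2)),
      div_le_iff₀ (by positivity : (0:ℝ) < (1+t^2)*(1+α^2))]
    have hfac : |α^2 - t^2| = |α - t| * |α + t| := by
      rw [← abs_mul]
      ring_nf
    rw [hfac]
    have hat : |α - t| ≤ e := abs_le.mpr ⟨by linarith, by linarith⟩
    have hsum : |α + t| ≤ (1+t^2)*(1+α^2) := by
      refine (abs_add_le _ _).trans ?_
      nlinarith [sq_abs t, sq_abs α, abs_nonneg t, abs_nonneg α,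
        sq_nonneg (|t| - 1), sq_nonneg (|α| - 1), mul_nonneg (sq_nonneg t) (sq_nonneg α)]
    exact mul_le_mul hat hsum (abs_nonneg _) (le_of_lt he)
  have hni := intervalIntegral.norm_integral_le_of_norm_le_const hbound
  rw [hint, Real.norm_eq_abs] at hni
  calc |(Real.arctan (α + e) - Real.arctan (α - e)) - 2*e/(1+α^2)|
      ≤ e * |(α + e) - (α - e)| := hni
  _ = 2*e*e := by
      rw [show (α + e) - (α - e) = 2*e by ring, abs_of_pos (by linarith)]
      ring

lemma triangle_count (p q M₀ : ℤ) (e : ℝ) (hq : 0 < q) (he : 0 < e)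
    (hpq : IsCoprime p q) (hM : 0 ≤ M₀) :
    |({x : ℤ × ℤ | 1 ≤ x.1 ∧ x.1 ≤ M₀ ∧ |(x.2 : ℝ) - (p : ℝ) / q * x.1| < x.1 * e}.ncard : ℝ)
      - (e * (M₀:ℝ)^2 + Int.fract ((q:ℝ)*e*M₀) * (1 - Int.fract ((q:ℝ)*e*M₀)) / ((q:ℝ)^2*e))|
      ≤ 4*(q:ℝ)*e*M₀ + 4 := by
  classical
  have hqR : (0:ℝ) < q := by exact_mod_cast hq
  have hM0R : (0:ℝ) ≤ (M₀:ℝ) := by exact_mod_cast hM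
  have hqe : (0:ℝ) < (q:ℝ)*e := by positivity
  set A : ℝ := (q:ℝ)*e*M₀ with hA
  have hA0 : 0 ≤ A := by positivity
  set Kz : ℤ := ⌊A⌋ with hKz
  have hKz0 : 0 ≤ Kz := Int.floor_nonneg.mpr hA0
  have hKzA : (Kz:ℝ) ≤ A := Int.floor_le A
  set L : ℤ → ℤ := fun k => ⌊(|k| : ℤ) / ((q:ℝ)*e)⌋ with hLdef
  set Bfin : Finset ((_ : ℤ) × ℤ) := (Finset.Icc (-Kz) Kz).sigma
      (fun k => (Finset.Ioc (L k) M₀).filter (fun m => q ∣ (k + p*m))) with hB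
  set f : (_ : ℤ) × ℤ → ℤ × ℤ := fun s => (s.2, (s.1 + p*s.2)/q) with hf
  -- the set equals the image
  have hseteq : {x : ℤ × ℤ | 1 ≤ x.1 ∧ x.1 ≤ M₀ ∧ |(x.2 : ℝ) - (p : ℝ) / q * x.1| < x.1 * e}
      = ↑(Bfin.image f) := by
    ext ⟨m, n⟩
    simp only [Set.mem_setOf_eq, coe_image, Set.mem_image, mem_coe, Finset.mem_sigma,
      mem_filter, mem_Ioc, mem_Icc, hB, hf]
    constructor
    · rintro ⟨hm1, hmM, habs⟩
      have hmR : (0:ℝ) < (m:ℝ) := by exact_mod_cast hm1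
      have hmM' : (m:ℝ) ≤ (M₀:ℝ) := by exact_mod_cast hmM
      set k : ℤ := q*n - p*m with hk
      have hkR : ((|k| : ℤ) : ℝ) < (q:ℝ)*e*m := by
        rw [hk]
        push_cast
        have h1 : ((q:ℝ)*n - p*m) = q * ((n:ℝ) - (p:ℝ)/q * m) := by field_simp
        rw [h1, abs_mul, abs_of_pos hqR]
        calc (q:ℝ) * |(n:ℝ) - (p:ℝ)/q * m| < q * (m*e) := mul_lt_mul_of_pos_left habs hqR
        _ = q*e*m := by ring
      have hkA : |k| ≤ Kz := by
        rw [hKz, Int.le_floor]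
        calc ((|k| : ℤ) : ℝ) ≤ (q:ℝ)*e*m := le_of_lt hkR
        _ ≤ A := by rw [hA]; nlinarith
      have hLk : L k < m := by
        rw [hLdef]
        dsimp only
        rw [Int.floor_lt]
        rw [div_lt_iff₀ hqe]
        calc ((|k| : ℤ) : ℝ) < (q:ℝ)*e*m := hkR
        _ = (m:ℝ) * ((q:ℝ)*e) := by ring
      have hdvd : q ∣ (k + p*m) := ⟨n, by rw [hk]; ring⟩
      have hkA' := abs_le.mp hkA
      refine ⟨⟨k, m⟩, ⟨⟨by dsimp only; omega, by dsimp only; omega⟩,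
        ⟨by dsimp only; exact hLk, by dsimp only; exact hmM⟩, by dsimp only; exact hdvd⟩, ?_⟩
      dsimp only
      have : (k + p*m)/q = n := by
        rw [hk]
        have h2 : q*n - p*m + p*m = q*n := by ring
        rw [h2]
        exact Int.mul_ediv_cancel_left n (ne_of_gt hq)
      rw [this]
    · rintro ⟨⟨k, m'⟩, ⟨⟨hk1, hk2⟩, ⟨hLm, hmM⟩, hdvd⟩, heq⟩
      dsimp only at hLm hmM hdvd heq hk1 hk2
      obtain ⟨hm'', hn''⟩ := Prod.mk.injEq .. ▸ heq
      -- heq : (m', (k + p*m')/q) = (m, n)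
      have hm'eq : m' = m := by rw [← hm'']
      subst hm'eq
      have hneq : n = (k + p*m')/q := by rw [← hn'']
      have hqn : q * n = k + p*m' := by rw [hneq]; exact Int.mul_ediv_cancel' hdvd
      have hL0 : 0 ≤ L k := by
        rw [hLdef]; dsimp only
        apply Int.floor_nonneg.mpr
        positivity
      have hm1 : 1 ≤ m' := by omega
      refine ⟨hm1, hmM, ?_⟩
      have hmflt : ((|k| : ℤ):ℝ) < (m':ℝ) * ((q:ℝ)*e) := by
        have h3 : ((|k| : ℤ):ℝ) / ((q:ℝ)*e) < (L k : ℝ) + 1 := by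
          rw [hLdef]; dsimp only; exact Int.lt_floor_add_one _
        have h4 : (L k : ℝ) + 1 ≤ (m' : ℝ) := by exact_mod_cast hLm
        rw [div_lt_iff₀ hqe] at h3
        calc ((|k| : ℤ):ℝ) < ((L k : ℝ) + 1) * ((q:ℝ)*e) := h3
        _ ≤ (m':ℝ) * ((q:ℝ)*e) := mul_le_mul_of_nonneg_right h4 (le_of_lt hqe)
      have hnval : (n:ℝ) - (p:ℝ)/q * m' = (k:ℝ)/q := by
        have : (q:ℝ) * n = k + p*m' := by exact_mod_cast hqn
        field_simp
        linarith [this]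
      rw [hnval, abs_div, abs_of_pos hqR]
      rw [div_lt_iff₀ hqR]
      calc |(k:ℝ)| = ((|k| : ℤ):ℝ) := by push_cast; ring
      _ < (m':ℝ) * ((q:ℝ)*e) := hmflt
      _ = (m':ℝ) * e * q := by ring
  -- injectivity
  have hinj : Set.InjOn f ↑Bfin := by
    rintro ⟨k, m⟩ hs ⟨k', m'⟩ ht hst
    simp only [mem_coe, Finset.mem_sigma, mem_filter, hB] at hs ht
    obtain ⟨hm'', hn''⟩ := Prod.mk.injEq .. ▸ hst
    have hmeq : m = m' := hm''
    subst hmeq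
    have h1 : q * ((k + p*m)/q) = k + p*m := Int.mul_ediv_cancel' hs.2.2
    have h2 : q * ((k' + p*m)/q) = k' + p*m := Int.mul_ediv_cancel' ht.2.2
    have h3 : k + p*m = k' + p*m := by rw [← h1, ← h2, hn'']
    have : k = k' := by omega
    rw [this]
  -- cardinality
  have hncard : ({x : ℤ × ℤ | 1 ≤ x.1 ∧ x.1 ≤ M₀ ∧ |(x.2 : ℝ) - (p : ℝ) / q * x.1| < x.1 * e}.ncard : ℝ)
      = ((Bfin.card : ℕ) : ℝ) := by
    rw [hseteq, Set.ncard_coe_finset, Finset.card_image_of_injOn hinj]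
  have hcardsum : (Bfin.card : ℝ) = ∑ k ∈ Finset.Icc (-Kz) Kz,
      (((Finset.Ioc (L k) M₀).filter (fun m => q ∣ (k + p*m))).card : ℝ) := by
    rw [hB, Finset.card_sigma]
    push_cast
    rfl
  obtain ⟨u, v, huv⟩ := id hpq
  have hq1 : (1:ℝ) ≤ (q:ℝ) := by exact_mod_cast hq
  -- per k estimate
  have hper : ∀ k ∈ Finset.Icc (-Kz) Kz,
      |(((Finset.Ioc (L k) M₀).filter (fun m => q ∣ (k + p*m))).card : ℝ)
        - ((M₀:ℝ) - ((|k|:ℤ):ℝ)/((q:ℝ)*e))/q| ≤ 1 := by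
    intro k hk
    simp only [mem_Icc] at hk
    set c : ℤ := -(k*u) with hc
    have hpred : (Finset.Ioc (L k) M₀).filter (fun m => q ∣ (k + p*m))
        = (Finset.Ioc (L k) M₀).filter (fun m => q ∣ (m - c)) := by
      apply Finset.filter_congr
      intro m _
      have hkey : (m - c)*p = (k + p*m) - k*(v*q) := by
        have : k*(u*p) = k*(1 - v*q) := by rw [← huv]; ring
        rw [hc]; nlinarith [this]
      have h6 : q ∣ k*(v*q) := ⟨k*v, by ring⟩
      constructor
      · intro hdvd
        apply (hpq.symm).dvd_of_dvd_mul_right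
        rw [hkey]
        exact dvd_sub hdvd h6
      · intro hdvd
        have h5 : q ∣ (m - c)*p := Dvd.dvd.mul_right hdvd p
        rw [hkey] at h5
        simpa using dvd_add h5 h6
    have hLkM : L k ≤ M₀ := by
      rw [hLdef]; dsimp only
      calc ⌊((|k|:ℤ):ℝ) / ((q:ℝ)*e)⌋ ≤ ⌊(M₀:ℝ)⌋ := by
            apply Int.floor_mono
            rw [div_le_iff₀ hqe]
            have : ((|k|:ℤ):ℝ) ≤ (Kz:ℝ) := by exact_mod_cast abs_le.mpr hk
            calc ((|k|:ℤ):ℝ) ≤ A := le_trans this hKzA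
            _ = (M₀:ℝ) * ((q:ℝ)*e) := by rw [hA]; ring
      _ = M₀ := Int.floor_intCast M₀
    set z1 : ℤ := M₀ - c with hz1
    set z2 : ℤ := L k - c with hz2
    have hcZ : ((((Finset.Ioc (L k) M₀).filter (fun m => q ∣ (k + p*m))).card : ℤ))
        = z1/q - z2/q := by
      rw [hpred, ap_count _ _ _ _ hq]
      rw [max_eq_left]
      rw [sub_nonneg]
      exact Int.ediv_le_ediv hq (by omega)
    have h1 := Int.mul_ediv_add_emod z1 q
    have h2 := Int.mul_ediv_add_emod z2 q
    have hkey2 : ((((Finset.Ioc (L k) M₀).filter (fun m => q ∣ (k + p*m))).card : ℤ)) * q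
        = (z1 - z1%q) - (z2 - z2%q) := by
      rw [hcZ]; linear_combination h1 - h2
    have hkeyR : ((((Finset.Ioc (L k) M₀).filter (fun m => q ∣ (k + p*m))).card : ℝ)) * q
        = (((z1:ℝ) - ((z1%q : ℤ):ℝ)) - ((z2:ℝ) - ((z2%q : ℤ):ℝ))) := by
      exact_mod_cast congrArg (fun t : ℤ => (t:ℝ)) hkey2
    have hr1a : (0:ℝ) ≤ ((z1%q : ℤ):ℝ) := by exact_mod_cast Int.emod_nonneg z1 (ne_of_gt hq)
    have hr1b : ((z1%q : ℤ):ℝ) + 1 ≤ (q:ℝ) := by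
      exact_mod_cast Int.lt_iff_add_one_le.mp (Int.emod_lt_of_pos z1 hq)
    have hr2a : (0:ℝ) ≤ ((z2%q : ℤ):ℝ) := by exact_mod_cast Int.emod_nonneg z2 (ne_of_gt hq)
    have hr2b : ((z2%q : ℤ):ℝ) + 1 ≤ (q:ℝ) := by
      exact_mod_cast Int.lt_iff_add_one_le.mp (Int.emod_lt_of_pos z2 hq)
    set xk : ℝ := ((|k|:ℤ):ℝ)/((q:ℝ)*e) with hxk
    have hfl1 : ((L k : ℤ):ℝ) ≤ xk := by
      rw [hLdef, hxk]; exact Int.floor_le _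
    have hfl2 : xk < ((L k : ℤ):ℝ) + 1 := by
      rw [hLdef, hxk]; exact Int.lt_floor_add_one _
    have hz1R : ((z1:ℤ):ℝ) = (M₀:ℝ) - (c:ℝ) := by rw [hz1]; push_cast; ring
    have hz2R : ((z2:ℤ):ℝ) = ((L k:ℤ):ℝ) - (c:ℝ) := by rw [hz2]; push_cast; ring
    have h9 : (((((Finset.Ioc (L k) M₀).filter (fun m => q ∣ (k + p*m))).card : ℝ))
        - ((M₀:ℝ) - xk)/q) * q = (xk - ((L k:ℤ):ℝ)) + ((z2%q:ℤ):ℝ) - ((z1%q:ℤ):ℝ) := by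
      rw [sub_mul, div_mul_cancel₀ _ (ne_of_gt hqR), hkeyR, hz1R, hz2R]
      ring
    have hval : ((((Finset.Ioc (L k) M₀).filter (fun m => q ∣ (k + p*m))).card : ℝ))
        - ((M₀:ℝ) - xk)/q
        = ((xk - ((L k:ℤ):ℝ)) + ((z2%q:ℤ):ℝ) - ((z1%q:ℤ):ℝ))/q := by
      rw [eq_div_iff (ne_of_gt hqR)]
      exact h9
    rw [hval, abs_div, abs_of_pos hqR, div_le_one hqR]
    apply abs_le.mpr
    constructor
    · linarith
    · linarith
  have hIccCard : ((Finset.Icc (-Kz) Kz).card : ℝ) = 2*(Kz:ℝ) + 1 := by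
    have h : ((Finset.Icc (-Kz) Kz).card : ℤ) = 2*Kz + 1 := by
      rw [Int.card_Icc]; omega
    exact_mod_cast h
  have htot : |(Bfin.card : ℝ) - ∑ k ∈ Finset.Icc (-Kz) Kz,
      ((M₀:ℝ) - ((|k|:ℤ):ℝ)/((q:ℝ)*e))/q| ≤ 2*(Kz:ℝ) + 1 := by
    rw [hcardsum, ← Finset.sum_sub_distrib]
    calc |∑ k ∈ Finset.Icc (-Kz) Kz,
        ((((Finset.Ioc (L k) M₀).filter (fun m => q ∣ (k + p*m))).card : ℝ)
          - ((M₀:ℝ) - ((|k|:ℤ):ℝ)/((q:ℝ)*e))/q)|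
        ≤ ∑ k ∈ Finset.Icc (-Kz) Kz,
          |(((Finset.Ioc (L k) M₀).filter (fun m => q ∣ (k + p*m))).card : ℝ)
          - ((M₀:ℝ) - ((|k|:ℤ):ℝ)/((q:ℝ)*e))/q| := Finset.abs_sum_le_sum_abs _ _
    _ ≤ ∑ _k ∈ Finset.Icc (-Kz) Kz, (1:ℝ) := Finset.sum_le_sum hper
    _ = 2*(Kz:ℝ) + 1 := by rw [Finset.sum_const, nsmul_eq_mul, mul_one, hIccCard]
  have hs1 : ∑ k ∈ Finset.Icc (-Kz) Kz, ((|k|:ℤ):ℝ) = (Kz:ℝ)*((Kz:ℝ)+1) := by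
    have h := congrArg (fun t : ℤ => (t:ℝ)) (sum_abs_Icc Kz hKz0)
    push_cast at h
    rw [← h]
    apply Finset.sum_congr rfl
    intro k _
    push_cast
    ring
  have hsumt : ∑ k ∈ Finset.Icc (-Kz) Kz, ((M₀:ℝ) - ((|k|:ℤ):ℝ)/((q:ℝ)*e))/q
      = e*(M₀:ℝ)^2 + Int.fract A * (1 - Int.fract A)/((q:ℝ)^2*e) := by
    rw [← Finset.sum_div, Finset.sum_sub_distrib, Finset.sum_const, nsmul_eq_mul, hIccCard,
      ← Finset.sum_div, hs1]
    have hfr : Int.fract A = A - (Kz:ℝ) := by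
      rw [hKz, Int.fract]
    rw [hfr, hA]
    field_simp
    ring
  rw [hncard, ← hsumt]
  refine htot.trans ?_
  have : (Kz:ℝ) ≤ (q:ℝ)*e*M₀ := hKzA
  linarith


lemma strip_count (α e lo hi : ℝ) (he : 0 < e) (hlo : 0 ≤ lo) (hlh : lo ≤ hi) :
    ({x : ℤ × ℤ | lo < (x.1:ℝ) ∧ (x.1:ℝ) ≤ hi ∧ |(x.2:ℝ) - α*x.1| < x.1*e}.ncard : ℝ)
      ≤ (hi - lo + 1) * (2*e*hi + 1) := by
  classical
  set Dfin : Finset ((_ : ℤ) × ℤ) := (Finset.Ioc ⌊lo⌋ ⌊hi⌋).sigma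
      (fun m => Finset.Ioo ⌊α*(m:ℝ) - (m:ℝ)*e⌋ ⌈α*(m:ℝ) + (m:ℝ)*e⌉) with hD
  set g : (_ : ℤ) × ℤ → ℤ × ℤ := fun s => (s.1, s.2) with hg
  have hsub : {x : ℤ × ℤ | lo < (x.1:ℝ) ∧ (x.1:ℝ) ≤ hi ∧ |(x.2:ℝ) - α*x.1| < x.1*e}
      ⊆ ↑(Dfin.image g) := by
    rintro ⟨m, n⟩ ⟨h1, h2, h3⟩
    rw [abs_lt] at h3
    simp only [coe_image, Set.mem_image, mem_coe, Finset.mem_sigma, mem_Ioc, mem_Ioo, hD, hg]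
    exact ⟨⟨m, n⟩, ⟨⟨Int.floor_lt.mpr h1, Int.le_floor.mpr h2⟩,
      Int.floor_lt.mpr (by linarith [h3.1]), Int.lt_ceil.mpr (by linarith [h3.2])⟩, rfl⟩
  have hfin : (Dfin.image g : Set (ℤ × ℤ)).Finite := (Dfin.image g).finite_toSet
  have h0 : ({x : ℤ × ℤ | lo < (x.1:ℝ) ∧ (x.1:ℝ) ≤ hi ∧ |(x.2:ℝ) - α*x.1| < x.1*e}.ncard : ℝ)
      ≤ ((Dfin.image g).card : ℝ) := by
    have := Set.ncard_le_ncard hsub hfin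
    rw [Set.ncard_coe_finset] at this
    exact_mod_cast this
  refine h0.trans ?_
  have h1 : ((Dfin.image g).card : ℝ) ≤ (Dfin.card : ℝ) := by
    exact_mod_cast Finset.card_image_le
  refine h1.trans ?_
  rw [hD, Finset.card_sigma]
  push_cast
  have hbnd : ∀ m ∈ Finset.Ioc ⌊lo⌋ ⌊hi⌋,
      ((Finset.Ioo ⌊α*(m:ℝ) - (m:ℝ)*e⌋ ⌈α*(m:ℝ) + (m:ℝ)*e⌉).card : ℝ) ≤ 2*e*hi + 1 := by
    intro m hm
    simp only [mem_Ioc] at hm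
    have hm0 : (0:ℝ) < (m:ℝ) := by
      have : ⌊lo⌋ ≥ 0 := Int.floor_nonneg.mpr hlo
      exact_mod_cast (by omega : 0 < m)
    have hmhi : (m:ℝ) ≤ hi := by
      have := hm.2
      calc (m:ℝ) ≤ (⌊hi⌋:ℝ) := by exact_mod_cast this
      _ ≤ hi := Int.floor_le hi
    have hcard : ((Finset.Ioo ⌊α*(m:ℝ) - (m:ℝ)*e⌋ ⌈α*(m:ℝ) + (m:ℝ)*e⌉).card : ℝ)
        = ((max (⌈α*(m:ℝ) + (m:ℝ)*e⌉ - ⌊α*(m:ℝ) - (m:ℝ)*e⌋ - 1) 0 : ℤ) : ℝ) := by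
      rw [Int.card_Ioo]
      have h' : ∀ z : ℤ, ((z.toNat : ℕ) : ℝ) = ((max z 0 : ℤ) : ℝ) := by
        intro z
        exact_mod_cast congrArg (fun t : ℤ => (t:ℝ)) (show (z.toNat:ℤ) = max z 0 by omega)
      exact h' _
    rw [hcard]
    have hceil : (⌈α*(m:ℝ) + (m:ℝ)*e⌉ : ℝ) < α*(m:ℝ) + (m:ℝ)*e + 1 := Int.ceil_lt_add_one _
    have hfloor : α*(m:ℝ) - (m:ℝ)*e - 1 < (⌊α*(m:ℝ) - (m:ℝ)*e⌋ : ℝ) := by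
      linarith [Int.lt_floor_add_one (α*(m:ℝ) - (m:ℝ)*e)]
    have hub : ((⌈α*(m:ℝ) + (m:ℝ)*e⌉ - ⌊α*(m:ℝ) - (m:ℝ)*e⌋ - 1 : ℤ) : ℝ) ≤ 2*e*hi + 1 := by
      push_cast
      nlinarith
    rcases max_cases (⌈α*(m:ℝ) + (m:ℝ)*e⌉ - ⌊α*(m:ℝ) - (m:ℝ)*e⌋ - 1) (0:ℤ) with ⟨heq, _⟩ | ⟨heq, _⟩
    · rw [heq]; exact_mod_cast hub
    · rw [heq]; push_cast; nlinarith
  calc (∑ m ∈ Finset.Ioc ⌊lo⌋ ⌊hi⌋,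
        ((Finset.Ioo ⌊α*(m:ℝ) - (m:ℝ)*e⌋ ⌈α*(m:ℝ) + (m:ℝ)*e⌉).card : ℝ))
      ≤ ∑ _m ∈ Finset.Ioc ⌊lo⌋ ⌊hi⌋, (2*e*hi + 1) := Finset.sum_le_sum hbnd
  _ = ((Finset.Ioc ⌊lo⌋ ⌊hi⌋).card : ℝ) * (2*e*hi + 1) := by
      rw [Finset.sum_const, nsmul_eq_mul]
  _ ≤ (hi - lo + 1) * (2*e*hi + 1) := by
      apply mul_le_mul_of_nonneg_right ?_ (by nlinarith)
      have hc : ((Finset.Ioc ⌊lo⌋ ⌊hi⌋).card : ℝ) = ((max (⌊hi⌋ - ⌊lo⌋) 0 : ℤ) : ℝ) := by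
        rw [Int.card_Ioc]
        exact_mod_cast congrArg (fun t : ℤ => (t:ℝ))
          (show ((⌊hi⌋ - ⌊lo⌋).toNat:ℤ) = max (⌊hi⌋ - ⌊lo⌋) 0 by omega)
      rw [hc]
      have h1' : ((⌊hi⌋ - ⌊lo⌋ : ℤ) : ℝ) ≤ hi - lo + 1 := by
        push_cast
        linarith [Int.floor_le hi, Int.lt_floor_add_one lo]
      rcases max_cases (⌊hi⌋ - ⌊lo⌋) (0:ℤ) with ⟨heq, _⟩ | ⟨heq, _⟩
      · rw [heq]; exact_mod_cast h1'
      · rw [heq]; push_cast; linarith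

/-- Fix `α = p/q ∈ ℚ` with `q > 0` and `gcd(p,q) = 1`, and let `ε = ε_R` be a positive
function of `R` with `ε_R → 0` and `ε_R · R → ∞`. Then
`S_α(ε,R) = Area + β/ε + O(ε² R²)`, where
`β = (1/q²)·{ε q² R/√(p²+q²)}·(1 − {ε q² R/√(p²+q²)})`. -/
theorem rational_slow_shrinking (p q : ℤ) (hq : 0 < q) (hpq : Int.gcd p q = 1)
    (ε : ℝ → ℝ) (hεpos : ∀ R, 0 < ε R)
    (hε0 : Tendsto ε atTop (nhds 0))
    (hεR : Tendsto (fun R => ε R * R) atTop atTop) :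
    (fun R => (latticeS ((p : ℝ) / q) (ε R) R : ℝ) -
        sectArea ((p : ℝ) / q) (ε R) R -
        (1 / (q : ℝ) ^ 2 *
            Int.fract (ε R * (q : ℝ) ^ 2 * R / Real.sqrt ((p : ℝ) ^ 2 + (q : ℝ) ^ 2)) *
            (1 - Int.fract (ε R * (q : ℝ) ^ 2 * R / Real.sqrt ((p : ℝ) ^ 2 + (q : ℝ) ^ 2)))) /
          ε R)
      =O[atTop] fun R => (ε R) ^ 2 * R ^ 2 := by
  have hqR : (0:ℝ) < q := by exact_mod_cast hq
  have hco : IsCoprime p q := Int.isCoprime_iff_gcd_eq_one.mpr hpq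
  set α : ℝ := (p:ℝ)/(q:ℝ) with hα
  set s : ℝ := Real.sqrt ((p:ℝ)^2 + (q:ℝ)^2) with hs
  have hs0 : 0 < s := Real.sqrt_pos.mpr (by positivity)
  have hs2 : s^2 = (p:ℝ)^2 + (q:ℝ)^2 := Real.sq_sqrt (by positivity)
  have hqs : (q:ℝ) ≤ s := by nlinarith [sq_nonneg ((p:ℝ))]
  have hεm : (0:ℝ) < min 1 ((q:ℝ)/(8*s*(1+|α|))) := by positivity
  rw [Asymptotics.isBigO_iff]
  refine ⟨50 + 14*|α| + 4*(q:ℝ), ?_⟩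
  have hev1 : ∀ᶠ R in atTop, ε R < min 1 ((q:ℝ)/(8*s*(1+|α|))) :=
    hε0.eventually_lt_const hεm
  have hev2 : ∀ᶠ R in atTop, 1 ≤ ε R * R := hεR.eventually_ge_atTop 1
  have hev3 : ∀ᶠ R in atTop, 4*s/(q:ℝ) + 1 ≤ R := eventually_ge_atTop _
  filter_upwards [hev1, hev2, hev3] with R he1 heR1 he3
  set e : ℝ := ε R with hedef
  have he0 : 0 < e := hεpos R
  have hR0 : 0 < R := lt_of_lt_of_le (by positivity) he3
  have he_le1 : e ≤ 1 := le_of_lt (lt_of_lt_of_le he1 (min_le_left _ _))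
  have he_small : e ≤ (q:ℝ)/(8*s*(1+|α|)) := le_of_lt (lt_of_lt_of_le he1 (min_le_right _ _))
  set Ms : ℝ := (q:ℝ)*R/s with hMs
  have hMs2 : Ms^2*(1+α^2) = R^2 := by
    rw [hMs, hα]
    field_simp
    nlinarith [hs2]
  have hMsR : Ms ≤ R := by
    rw [hMs, div_le_iff₀ hs0]
    nlinarith
  have hMs4 : 4 ≤ Ms := by
    rw [hMs, le_div_iff₀ hs0]
    rw [div_add' _ _ _ (ne_of_gt hqR), div_le_iff₀ hqR] at he3
    nlinarith
  have hMs0 : 0 < Ms := by linarith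
  set M₀ : ℤ := ⌊Ms⌋ with hM₀
  have hM₀1 : 1 ≤ M₀ := Int.le_floor.mpr (by push_cast; linarith)
  have hM₀le : (M₀:ℝ) ≤ Ms := Int.floor_le _
  have hM₀ge : Ms - 1 ≤ (M₀:ℝ) := by linarith [Int.lt_floor_add_one Ms]
  set δ : ℝ := 2*(1+|α|)*(e*R) with hδ
  have hδ0 : (0:ℝ) ≤ δ := by positivity
  have hδMs : δ ≤ Ms/4 := by
    have h1 : δ ≤ 2*(1+|α|)*(((q:ℝ)/(8*s*(1+|α|)))*R) := by
      rw [hδ]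
      have : e*R ≤ ((q:ℝ)/(8*s*(1+|α|)))*R :=
        mul_le_mul_of_nonneg_right he_small hR0.le
      nlinarith [abs_nonneg α]
    have h2 : 2*(1+|α|)*(((q:ℝ)/(8*s*(1+|α|)))*R) = Ms/4 := by
      rw [hMs]
      have hαpos : (0:ℝ) < 1 + |α| := by positivity
      field_simp
      ring
    linarith
  set lo : ℝ := Ms - δ - 1 with hlo
  set hi : ℝ := Ms + 2*(e*R) with hhi
  have hlo0 : 0 ≤ lo := by rw [hlo]; linarith
  have hlohi : lo ≤ hi := by rw [hlo, hhi]; nlinarith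
  have hhiR : hi ≤ 3*R := by rw [hhi]; nlinarith
  -- the three sets
  set Sset : Set (ℤ×ℤ) := {x : ℤ × ℤ | 1 ≤ x.1 ∧ (x.1 : ℝ) ^ 2 + (x.2 : ℝ) ^ 2 ≤ R ^ 2 ∧
    |(x.2 : ℝ) - α * x.1| < x.1 * e} with hSdef
  set Aset : Set (ℤ×ℤ) := {x : ℤ × ℤ | 1 ≤ x.1 ∧ x.1 ≤ M₀ ∧
    |(x.2 : ℝ) - α * x.1| < x.1 * e} with hAdef
  set Dset : Set (ℤ×ℤ) := {x : ℤ × ℤ | lo < (x.1:ℝ) ∧ (x.1:ℝ) ≤ hi ∧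
    |(x.2:ℝ) - α*x.1| < x.1*e} with hDdef
  -- basic coordinate bounds
  have hcone : ∀ x : ℤ×ℤ, (1:ℝ) ≤ (x.1:ℝ) → |(x.2:ℝ) - α*x.1| < x.1*e →
      |(x.2:ℝ)| ≤ (|α|+1)*x.1 := by
    intro x h1 h2
    have : |(x.2:ℝ)| ≤ |α*(x.1:ℝ)| + |(x.2:ℝ) - α*x.1| := by
      calc |(x.2:ℝ)| = |α*(x.1:ℝ) + ((x.2:ℝ) - α*x.1)| := by ring_nf
      _ ≤ |α*(x.1:ℝ)| + |(x.2:ℝ) - α*x.1| := abs_add_le _ _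
    have hx1 : |α*(x.1:ℝ)| = |α| * x.1 := by
      rw [abs_mul, abs_of_pos (by linarith : (0:ℝ) < (x.1:ℝ))]
    have hint : (x.1:ℝ)*e ≤ (x.1:ℝ)*1 :=
      mul_le_mul_of_nonneg_left he_le1 (le_trans zero_le_one h1)
    linarith only [this, hx1, h2, hint]
  -- finiteness
  have hSfin : Sset.Finite := by
    apply finite_boxed _ R
    rintro ⟨m, n⟩ ⟨h1, h2, _⟩
    have hm1 : (1:ℝ) ≤ (m:ℝ) := by exact_mod_cast h1
    constructor
    · apply le_of_sq_le' _ _ _ hR0.le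
      rw [sq_abs]; nlinarith [sq_nonneg ((n:ℝ))]
    · apply le_of_sq_le' _ _ _ hR0.le
      rw [sq_abs]; nlinarith [sq_nonneg ((m:ℝ))]
  have hAfin : Aset.Finite := by
    apply finite_boxed _ ((|α|+1)*Ms)
    rintro ⟨m, n⟩ ⟨h1, h2, h3⟩
    have hm1 : (1:ℝ) ≤ (m:ℝ) := by exact_mod_cast h1
    have hmM : (m:ℝ) ≤ (M₀:ℝ) := by exact_mod_cast h2
    have hmMs : (m:ℝ) ≤ Ms := le_trans hmM hM₀le
    constructor
    · rw [abs_of_pos (by linarith : (0:ℝ) < (m:ℝ))]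
      exact le_trans hmMs (le_mul_of_one_le_left hMs0.le (by linarith [abs_nonneg α]))
    · exact (hcone ⟨m,n⟩ hm1 h3).trans (mul_le_mul_of_nonneg_left hmMs (by positivity))
  have hDfin : Dset.Finite := by
    apply finite_boxed _ ((|α|+1)*hi)
    rintro ⟨m, n⟩ ⟨h1, h2, h3⟩
    have hm1 : (1:ℝ) ≤ (m:ℝ) := by
      have : (0:ℝ) < (m:ℝ) := lt_of_le_of_lt hlo0 h1
      exact_mod_cast (by exact_mod_cast this : (0:ℤ) < m)
    have hhi0 : (0:ℝ) ≤ hi := le_trans hlo0 hlohi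
    constructor
    · rw [abs_of_pos (by linarith : (0:ℝ) < (m:ℝ))]
      exact le_trans h2 (le_mul_of_one_le_left hhi0 (by linarith [abs_nonneg α]))
    · exact (hcone ⟨m,n⟩ hm1 h3).trans (mul_le_mul_of_nonneg_left h2 (by positivity))
  -- upper cap bound
  have hFup : ∀ x : ℤ×ℤ, x ∈ Sset → (x.1:ℝ) ≤ hi := by
    rintro ⟨m, n⟩ ⟨h1, h2, h3⟩
    have hm1 : (1:ℝ) ≤ (m:ℝ) := by exact_mod_cast h1
    have hmR : (m:ℝ) ≤ R := by
      apply le_of_sq_le' _ _ _ hR0.le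
      nlinarith [sq_nonneg ((n:ℝ))]
    have hnR : |(n:ℝ)| ≤ R := by
      apply le_of_sq_le' _ _ _ hR0.le
      rw [sq_abs]; nlinarith [sq_nonneg ((m:ℝ))]
    have hd : |(n:ℝ) - α*m| ≤ e*R := by
      refine (le_of_lt h3).trans ?_
      nlinarith
    have hnd : |(n:ℝ)*((n:ℝ) - α*m)| ≤ R*(e*R) := by
      rw [abs_mul]
      exact mul_le_mul hnR hd (abs_nonneg _) hR0.le
    have hnd' : -(R*(e*R)) ≤ (n:ℝ)*((n:ℝ) - α*m) := neg_le_of_abs_le hnd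
    have hd2 : ((n:ℝ) - α*m)^2 ≤ (e*R)^2 := by
      rw [← sq_abs]
      apply pow_le_pow_left₀ (abs_nonneg _) hd
    have key : (m:ℝ)^2*(1+α^2) ≤ (R*(1+e))^2 := by
      have hid : (m:ℝ)^2*(1+α^2) = (m:ℝ)^2 + ((n:ℝ)^2 - 2*((n:ℝ)*((n:ℝ) - α*m))
          + ((n:ℝ) - α*m)^2) := by ring
      have hid3 : (R*(1+e))^2 = R^2 + (2*(R*(e*R)) + (e*R)^2) := by ring
      rw [hid, hid3]
      linarith [h2, hnd', hd2]
    have hid4 : (R*(1+e))^2 = (Ms*(1+e))^2*(1+α^2) := by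
      linear_combination (-((1+e)^2)) * hMs2
    have key2 : (m:ℝ)^2 ≤ (Ms*(1+e))^2 := by
      rw [hid4] at key
      exact le_of_mul_le_mul_right key (by positivity)
    have key3 : (m:ℝ) ≤ Ms*(1+e) := le_of_sq_le' _ _ key2 (by positivity)
    have hMse : Ms*e ≤ R*e := mul_le_mul_of_nonneg_right hMsR he0.le
    have heR0 : 0 ≤ e*R := by positivity
    rw [hhi]
    linarith only [key3, hMse, heR0]
  -- lower bound: inside lo implies in circle
  have hFlow : ∀ x : ℤ×ℤ, x ∈ Aset → ¬((x.1 : ℝ)^2 + (x.2:ℝ)^2 ≤ R^2) → lo < (x.1:ℝ) := by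
    rintro ⟨m, n⟩ ⟨h1, h2, h3⟩ hnot
    by_contra hcon
    push_neg at hcon
    apply hnot
    have hm1 : (1:ℝ) ≤ (m:ℝ) := by exact_mod_cast h1
    have hn : |(n:ℝ)| ≤ (|α|+e)*(m:ℝ) := by
      have h4 : |(n:ℝ)| ≤ |α*(m:ℝ)| + |(n:ℝ) - α*m| := by
        calc |(n:ℝ)| = |α*(m:ℝ) + ((n:ℝ) - α*m)| := by ring_nf
        _ ≤ |α*(m:ℝ)| + |(n:ℝ) - α*m| := abs_add_le _ _
      have hx1 : |α*(m:ℝ)| = |α| * m := by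
        rw [abs_mul, abs_of_pos (by linarith : (0:ℝ) < (m:ℝ))]
      linarith only [h4, hx1, h3]
    have hn2 : (n:ℝ)^2 ≤ ((|α|+e)*(m:ℝ))^2 := by
      rw [← sq_abs ((n:ℝ))]
      apply pow_le_pow_left₀ (abs_nonneg _) hn
    have hf3a : Ms*e*(2*|α|+e) ≤ R*e*(2*|α|+1) := by
      have p1 : 0 ≤ (R - Ms)*(e*(2*|α|+e)) :=
        mul_nonneg (by linarith only [hMsR]) (by positivity)
      have p2 : R*(e*(2*|α|+e)) ≤ R*(e*(2*|α|+1)) :=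
        mul_le_mul_of_nonneg_left
          (mul_le_mul_of_nonneg_left (by linarith only [he_le1]) he0.le) hR0.le
      linarith only [p1, p2]
    have hf3b : R*e*(2*|α|+1) ≤ δ := by
      rw [hδ]
      have p3 : (0:ℝ) ≤ e*R := by positivity
      linarith only [p3]
    have hf3 : Ms*e*(2*|α|+e) ≤ δ := le_trans hf3a hf3b
    have hmloMs : (m:ℝ) ≤ Ms - δ - 1 := by rw [hlo] at hcon; linarith only [hcon]
    have hδMs' : δ ≤ Ms := by linarith only [hm1, hmloMs]
    have hm2 : (m:ℝ)^2 ≤ (Ms - δ)^2 :=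
      pow_le_pow_left₀ (by linarith only [hm1]) (by linarith only [hmloMs]) 2
    have hintA : (m:ℝ)^2*(1+α^2) ≤ (Ms-δ)^2*(1+α^2) :=
      mul_le_mul_of_nonneg_right hm2 (by positivity)
    have hintE : (m:ℝ)^2*(2*|α| * e+e^2) ≤ (Ms-δ)^2*(2*|α| * e+e^2) :=
      mul_le_mul_of_nonneg_right hm2 (by positivity)
    have hintF : (Ms - δ)^2 ≤ Ms^2 :=
      pow_le_pow_left₀ (by linarith only [hδMs']) (by linarith only [hδ0]) 2
    have hintE2 : (Ms-δ)^2*(2*|α| * e+e^2) ≤ Ms^2*(2*|α| * e+e^2) :=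
      mul_le_mul_of_nonneg_right hintF (by positivity)
    have hintB : Ms*(Ms*e*(2*|α|+e)) ≤ Ms*δ :=
      mul_le_mul_of_nonneg_left hf3 hMs0.le
    have hintC : δ*δ ≤ δ*Ms := mul_le_mul_of_nonneg_left hδMs' hδ0
    have q1 : Ms*δ ≤ (2*Ms*δ - δ*δ) := by linarith only [hintC]
    have q0 : (0:ℝ) ≤ 2*Ms*δ - δ*δ := by
      have := mul_nonneg hMs0.le hδ0
      linarith only [q1, this]
    have q2 : (2*Ms*δ - δ*δ)*1 ≤ (2*Ms*δ - δ*δ)*(1+α^2) :=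
      mul_le_mul_of_nonneg_left (by linarith only [sq_nonneg α]) q0
    have main : (m:ℝ)^2*((1+α^2) + (2*|α| * e + e^2)) ≤ Ms^2*(1+α^2) := by
      linarith only [hintA, hintE, hintE2, hintB, q1, q2]
    have hexp : ((|α|+e)*(m:ℝ))^2 = (m:ℝ)^2*(α^2 + 2*|α| * e + e^2) := by
      linear_combination ((m:ℝ)^2)*(sq_abs α)
    linarith only [hn2, hexp, main, hMs2]
  -- inclusions
  have hSA : Sset ⊆ Aset ∪ Dset := by
    rintro ⟨m, n⟩ hx
    obtain ⟨h1, h2, h3⟩ := hx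
    by_cases hm : m ≤ M₀
    · exact Or.inl ⟨h1, hm, h3⟩
    · right
      push_neg at hm
      refine ⟨?_, hFup ⟨m,n⟩ ⟨h1,h2,h3⟩, h3⟩
      have hmm : (M₀:ℝ) < (m:ℝ) := by exact_mod_cast hm
      rw [hlo]
      linarith only [hmm, hM₀ge, hδ0]
  have hAS : Aset ⊆ Sset ∪ Dset := by
    rintro ⟨m, n⟩ hx
    obtain ⟨h1, h2, h3⟩ := hx
    by_cases hc : ((m:ℤ):ℝ)^2 + ((n:ℤ):ℝ)^2 ≤ R^2
    · exact Or.inl ⟨h1, hc, h3⟩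
    · right
      refine ⟨hFlow ⟨m,n⟩ ⟨h1,h2,h3⟩ hc, ?_, h3⟩
      have hmM : (m:ℝ) ≤ (M₀:ℝ) := by exact_mod_cast h2
      have heR0' : (0:ℝ) ≤ 2*(e*R) := by positivity
      rw [hhi]
      linarith only [hmM, hM₀le, heR0']
  -- cardinality comparison
  have c1 : (Sset.ncard : ℝ) ≤ (Aset.ncard : ℝ) + (Dset.ncard : ℝ) := by
    have h6 := (Set.ncard_le_ncard hSA (hAfin.union hDfin)).trans
      (Set.ncard_union_le Aset Dset)
    exact_mod_cast h6
  have c2 : (Aset.ncard : ℝ) ≤ (Sset.ncard : ℝ) + (Dset.ncard : ℝ) := by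
    have h6 := (Set.ncard_le_ncard hAS (hSfin.union hDfin)).trans
      (Set.ncard_union_le Sset Dset)
    exact_mod_cast h6
  have habsSA : |(Sset.ncard : ℝ) - (Aset.ncard : ℝ)| ≤ (Dset.ncard : ℝ) :=
    abs_le.mpr ⟨by linarith only [c2], by linarith only [c1]⟩
  -- strip bound
  have cD := strip_count α e lo hi he0 hlo0 hlohi
  rw [← hDdef] at cD
  have hhi0 : (0:ℝ) ≤ hi := le_trans hlo0 hlohi
  have hD1 : hi - lo + 1 ≤ (6 + 2*|α|)*(e*R) := by
    rw [hhi, hlo, hδ]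
    linarith only [heR1]
  have hD2 : 2*e*hi + 1 ≤ 7*(e*R) := by
    rw [hhi]
    have w1 : e*Ms ≤ e*R := mul_le_mul_of_nonneg_left hMsR he0.le
    have w2 : e*(e*R) ≤ 1*(e*R) := mul_le_mul_of_nonneg_right he_le1 (by positivity)
    linarith only [w1, w2, heR1]
  have cD2 : (Dset.ncard : ℝ) ≤ (42 + 14*|α|)*((e*R)^2) := by
    refine cD.trans ?_
    have w3 : (0:ℝ) ≤ 2*e*hi + 1 := by
      have := mul_nonneg (mul_nonneg (by norm_num : (0:ℝ) ≤ 2) he0.le) hhi0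
      linarith only [this]
    calc (hi - lo + 1) * (2*e*hi + 1) ≤ ((6 + 2*|α|)*(e*R)) * (7*(e*R)) :=
      mul_le_mul hD1 hD2 w3 (by positivity)
    _ = (42 + 14*|α|)*((e*R)^2) := by ring
  -- triangle count
  have hTC := triangle_count p q M₀ e hq he0 hco (le_trans zero_le_one hM₀1)
  rw [← hα, ← hAdef] at hTC
  have w4 : e*R ≤ (e*R)^2 := by
    have h7 := mul_nonneg (by positivity : (0:ℝ) ≤ e*R)
      (by linarith only [heR1] : (0:ℝ) ≤ e*R - 1)
    linarith only [h7]
  have w5 : (1:ℝ) ≤ (e*R)^2 := by linarith only [heR1, w4]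
  have hTC2 : |(Aset.ncard : ℝ) - (e*(M₀:ℝ)^2
      + Int.fract ((q:ℝ)*e*(M₀:ℝ)) * (1 - Int.fract ((q:ℝ)*e*(M₀:ℝ))) / ((q:ℝ)^2*e))|
      ≤ (4*(q:ℝ)+4)*(e*R)^2 := by
    refine hTC.trans ?_
    have w6 : (q:ℝ)*e*(M₀:ℝ) ≤ (q:ℝ)*(e*R) := by
      have := mul_le_mul_of_nonneg_left
        (mul_le_mul_of_nonneg_left (hM₀le.trans hMsR) he0.le) hqR.le
      linarith only [this]
    have w7 : (q:ℝ)*(e*R) ≤ (q:ℝ)*(e*R)^2 := mul_le_mul_of_nonneg_left w4 hqR.le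
    linarith only [w5, w6, w7]
  -- area estimate
  have hMsq : Ms^2 = R^2/(1+α^2) := by
    rw [eq_div_iff (by positivity : (1:ℝ)+α^2 ≠ 0)]
    exact hMs2
  have hArea : |sectArea α e R - e*Ms^2| ≤ (e*R)^2 := by
    have h5 : sectArea α e R - e*Ms^2
        = R^2/2*((Real.arctan (α+e) - Real.arctan (α-e)) - 2*e/(1+α^2)) := by
      simp only [sectArea]
      rw [hMsq]
      ring
    rw [h5, abs_mul, abs_of_nonneg (by positivity : (0:ℝ) ≤ R^2/2)]
    calc R^2/2 * |(Real.arctan (α+e) - Real.arctan (α-e)) - 2*e/(1+α^2)|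
        ≤ R^2/2 * (2*e*e) := mul_le_mul_of_nonneg_left (area_est α e he0) (by positivity)
    _ = (e*R)^2 := by ring
  -- T3
  have hT3 : |e*(M₀:ℝ)^2 - e*Ms^2| ≤ 2*(e*R)^2 := by
    have u0 : (0:ℝ) ≤ M₀ := by exact_mod_cast le_trans zero_le_one hM₀1
    have u1 : Ms^2 - (M₀:ℝ)^2 ≤ 2*R := by
      have v2 : (Ms - (M₀:ℝ))*(Ms + (M₀:ℝ)) ≤ 1*(Ms + (M₀:ℝ)) :=
        mul_le_mul_of_nonneg_right (by linarith only [hM₀ge])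
          (by linarith only [u0, hMs0.le])
      linarith only [v2, hM₀le, hMsR]
    have u2 : (M₀:ℝ)^2 ≤ Ms^2 := pow_le_pow_left₀ u0 hM₀le 2
    have u3 : e*(Ms^2 - (M₀:ℝ)^2) ≤ e*(2*R) :=
      mul_le_mul_of_nonneg_left u1 he0.le
    have u4 : e*(M₀:ℝ)^2 ≤ e*Ms^2 := mul_le_mul_of_nonneg_left u2 he0.le
    rw [abs_of_nonpos (by linarith only [u4])]
    linarith only [u3, w4]
  -- T4 : fract terms
  have hT4 : |Int.fract ((q:ℝ)*e*(M₀:ℝ)) * (1 - Int.fract ((q:ℝ)*e*(M₀:ℝ))) / ((q:ℝ)^2*e)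
      - Int.fract ((q:ℝ)*e*Ms) * (1 - Int.fract ((q:ℝ)*e*Ms)) / ((q:ℝ)^2*e)| ≤ (e*R)^2 := by
    rw [div_sub_div_same, abs_div, abs_of_pos (by positivity : (0:ℝ) < (q:ℝ)^2*e)]
    have t1 := g_lip ((q:ℝ)*e*(M₀:ℝ)) ((q:ℝ)*e*Ms)
    have t2 : |(q:ℝ)*e*(M₀:ℝ) - (q:ℝ)*e*Ms| ≤ (q:ℝ)*e := by
      have s1 : ((q:ℝ)*e)*(M₀:ℝ) ≤ ((q:ℝ)*e)*Ms :=
        mul_le_mul_of_nonneg_left hM₀le (by positivity)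
      rw [abs_of_nonpos (by linarith only [s1])]
      have s2 := mul_le_mul_of_nonneg_left (show Ms - (M₀:ℝ) ≤ 1 by linarith only [hM₀ge])
        (by positivity : (0:ℝ) ≤ (q:ℝ)*e)
      linarith only [s2]
    have t3 : |Int.fract ((q:ℝ)*e*(M₀:ℝ)) * (1 - Int.fract ((q:ℝ)*e*(M₀:ℝ)))
        - Int.fract ((q:ℝ)*e*Ms) * (1 - Int.fract ((q:ℝ)*e*Ms))| ≤ (q:ℝ)*e := t1.trans t2
    rw [div_le_iff₀ (by positivity : (0:ℝ) < (q:ℝ)^2*e)]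
    calc |Int.fract ((q:ℝ)*e*(M₀:ℝ)) * (1 - Int.fract ((q:ℝ)*e*(M₀:ℝ)))
        - Int.fract ((q:ℝ)*e*Ms) * (1 - Int.fract ((q:ℝ)*e*Ms))| ≤ (q:ℝ)*e := t3
    _ ≤ (e*R)^2 * ((q:ℝ)^2*e) := by
        have hq1R : (1:ℝ) ≤ (q:ℝ) := by exact_mod_cast hq
        have y0 := mul_nonneg hqR.le (by linarith only [hq1R] : (0:ℝ) ≤ (q:ℝ) - 1)
        have y1 : (q:ℝ)*e ≤ (q:ℝ)^2*e :=
          mul_le_mul_of_nonneg_right (by linarith only [y0]) he0.le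
        have y2 : 1*((q:ℝ)^2*e) ≤ (e*R)^2*((q:ℝ)^2*e) :=
          mul_le_mul_of_nonneg_right w5 (by positivity)
        linarith only [y1, y2]
  -- final assembly
  rw [Real.norm_eq_abs, Real.norm_eq_abs, abs_of_nonneg (by positivity : (0:ℝ) ≤ e^2*R^2)]
  have hlatt : (latticeS α e R : ℕ) = Sset.ncard := rfl
  have hargeq : e * (q:ℝ)^2 * R / s = (q:ℝ)*e*Ms := by rw [hMs]; ring
  rw [hlatt, hargeq]
  have hbeta : (1/(q:ℝ)^2 * Int.fract ((q:ℝ)*e*Ms) * (1 - Int.fract ((q:ℝ)*e*Ms)))/e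
      = Int.fract ((q:ℝ)*e*Ms) * (1 - Int.fract ((q:ℝ)*e*Ms))/((q:ℝ)^2*e) := by
    field_simp
  rw [hbeta]
  set X : ℝ := (Sset.ncard : ℝ) with hX
  set Y : ℝ := (Aset.ncard : ℝ) with hY
  set Area : ℝ := sectArea α e R with hAr
  set P₀ : ℝ := e*(M₀:ℝ)^2 with hP₀
  set Q₀ : ℝ := Int.fract ((q:ℝ)*e*(M₀:ℝ)) * (1 - Int.fract ((q:ℝ)*e*(M₀:ℝ))) / ((q:ℝ)^2*e)
    with hQ₀
  set PS : ℝ := e*Ms^2 with hPS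
  set QS : ℝ := Int.fract ((q:ℝ)*e*Ms) * (1 - Int.fract ((q:ℝ)*e*Ms)) / ((q:ℝ)^2*e) with hQS
  have hsplit : X - Area - QS
      = (X - Y) + ((Y - (P₀ + Q₀)) + ((P₀ - PS) + ((Q₀ - QS) + (PS - Area)))) := by ring
  rw [hsplit]
  have A1 := abs_add_le (X - Y) ((Y - (P₀ + Q₀)) + ((P₀ - PS) + ((Q₀ - QS) + (PS - Area))))
  have A2 := abs_add_le (Y - (P₀ + Q₀)) ((P₀ - PS) + ((Q₀ - QS) + (PS - Area)))
  have A3 := abs_add_le (P₀ - PS) ((Q₀ - QS) + (PS - Area))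
  have A4 := abs_add_le (Q₀ - QS) (PS - Area)
  have hPA : |PS - Area| ≤ (e*R)^2 := by rw [abs_sub_comm]; exact hArea
  have hend : (50 + 14*|α| + 4*(q:ℝ))*((e*R)^2) = (50 + 14*|α| + 4*(q:ℝ))*(e^2*R^2) := by
    ring
  calc |(X - Y) + ((Y - (P₀ + Q₀)) + ((P₀ - PS) + ((Q₀ - QS) + (PS - Area))))|
      ≤ (42 + 14*|α|)*((e*R)^2) + ((4*(q:ℝ)+4)*(e*R)^2 + (2*(e*R)^2 + ((e*R)^2 + (e*R)^2)))
        := by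
        have B1 := habsSA.trans cD2
        linarith only [A1, A2, A3, A4, B1, hTC2, hT3, hT4, hPA]
  _ ≤ (50 + 14*|α| + 4*(q:ℝ))*(e^2*R^2) := by
      rw [← hend]
      have : (0:ℝ) ≤ (e*R)^2 := by positivity
      linarith only [this]
end

section
/- Fix α = p/q ∈ ℚ with q > 0 and gcd(p,q) = 1, and let ε = ε_R be a positive function of R with ε_R·R → 0 as R → ∞. Then, as R → ∞, S_α(ε,R) = R/√(p²+q²) + O(1), with implied constant depending only on p and q. -/
open Filter Real

set_option maxHeartbeats 1000000

lemma latticeS_eq_s8 (p q : ℤ) (hq : 0 < q) (hpq : Int.gcd p q = 1)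
    (ε R : ℝ) (hε : 0 < ε) (hR : 1 ≤ R)
    (h1 : (q : ℝ) * (ε * R) < 1) :
    latticeS ((p : ℝ) / q) ε R
      = (⌊R / Real.sqrt ((p : ℝ) ^ 2 + (q : ℝ) ^ 2)⌋).toNat := by
  set s : ℝ := Real.sqrt ((p : ℝ) ^ 2 + (q : ℝ) ^ 2) with hs_def
  have hq0 : (0 : ℝ) < (q : ℝ) := by exact_mod_cast hq
  have hqne : (q : ℝ) ≠ 0 := ne_of_gt hq0
  have hsum : (0 : ℝ) < (p : ℝ) ^ 2 + (q : ℝ) ^ 2 := by positivity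
  have hs : 0 < s := Real.sqrt_pos.mpr hsum
  have hs2 : s ^ 2 = (p : ℝ) ^ 2 + (q : ℝ) ^ 2 := Real.sq_sqrt hsum.le
  have hset : {x : ℤ × ℤ | 1 ≤ x.1 ∧ (x.1 : ℝ) ^ 2 + (x.2 : ℝ) ^ 2 ≤ R ^ 2 ∧
      |(x.2 : ℝ) - (p : ℝ) / q * x.1| < x.1 * ε}
      = (fun k : ℤ => (q * k, p * k)) '' Set.Icc 1 ⌊R / s⌋ := by
    ext ⟨m, n⟩
    simp only [Set.mem_setOf_eq, Set.mem_image, Set.mem_Icc, Prod.mk.injEq]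
    constructor
    · rintro ⟨hm, hcirc, habs⟩
      have hm0 : (0 : ℝ) < (m : ℝ) := by exact_mod_cast hm
      have hmR : (m : ℝ) ≤ R := by nlinarith [sq_nonneg ((n : ℝ))]
      have hid : (q : ℝ) * n - p * m = q * ((n : ℝ) - p / q * m) := by
        field_simp
      have key : |(q : ℝ) * n - p * m| < 1 := by
        rw [abs_lt] at habs ⊢
        rw [hid]
        constructor <;>
          nlinarith [mul_lt_mul_of_pos_left habs.1 hq0,
            mul_lt_mul_of_pos_left habs.2 hq0, mul_pos hq0 hε, hmR, h1, hε]
      have keyZ : q * n - p * m = 0 := by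
        have h2 : |((q * n - p * m : ℤ) : ℝ)| < 1 := by push_cast; exact key
        rw [← Int.cast_abs] at h2
        have h3 : |q * n - p * m| < 1 := by exact_mod_cast h2
        rcases abs_lt.mp h3 with ⟨hl, hr⟩
        have hl' := Int.lt_iff_add_one_le.mp hl
        have hr' := Int.lt_iff_add_one_le.mp hr
        linarith
      have hdvd : q ∣ m := by
        have hcop : IsCoprime (q : ℤ) p := by
          rw [Int.isCoprime_iff_gcd_eq_one, Int.gcd_comm]; exact hpq
        have hd : q ∣ p * m := ⟨n, by linarith [keyZ]⟩
        exact hcop.dvd_of_dvd_mul_left hd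
      obtain ⟨k, rfl⟩ := hdvd
      have hn : n = p * k := by
        have : q * n = q * (p * k) := by linarith [keyZ]
        exact mul_left_cancel₀ (ne_of_gt hq) this
      subst hn
      have hk1 : (1 : ℤ) ≤ k := by nlinarith [hm, hq]
      refine ⟨k, ⟨hk1, ?_⟩, rfl, rfl⟩
      rw [Int.le_floor, le_div_iff₀ hs]
      have hk0 : (0 : ℝ) < (k : ℝ) := by
        exact_mod_cast lt_of_lt_of_le zero_lt_one hk1
      push_cast at hcirc
      have e : ((q : ℝ) * k) ^ 2 + ((p : ℝ) * k) ^ 2 = ((k : ℝ) * s) ^ 2 := by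
        rw [mul_pow (k : ℝ) s, hs2]; ring
      nlinarith [mul_pos hk0 hs, hR]
    · rintro ⟨k, ⟨hk1, hk2⟩, rfl, rfl⟩
      have hk0 : (0 : ℝ) < (k : ℝ) := by
        exact_mod_cast lt_of_lt_of_le zero_lt_one hk1
      have hkR : (k : ℝ) * s ≤ R := by
        have hkf : (k : ℝ) ≤ R / s :=
          le_trans (show (k : ℝ) ≤ (⌊R / s⌋ : ℝ) by exact_mod_cast hk2) (Int.floor_le _)
        calc (k : ℝ) * s ≤ R / s * s := by nlinarith
        _ = R := div_mul_cancel₀ _ (ne_of_gt hs)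
      refine ⟨by nlinarith [hq, hk1], ?_, ?_⟩
      · push_cast
        have e : ((q : ℝ) * k) ^ 2 + ((p : ℝ) * k) ^ 2 = ((k : ℝ) * s) ^ 2 := by
          rw [mul_pow (k : ℝ) s, hs2]; ring
        nlinarith [mul_pos hk0 hs, hkR, e]
      · have hz : ((p * k : ℤ) : ℝ) - (p : ℝ) / q * ((q * k : ℤ) : ℝ) = 0 := by
          push_cast; field_simp; ring
        rw [hz, abs_zero]
        have : (0 : ℝ) < ((q * k : ℤ) : ℝ) := by
          push_cast; exact mul_pos hq0 hk0
        exact mul_pos this hε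
  have hinj : Function.Injective (fun k : ℤ => (q * k, p * k)) := by
    intro a b hab
    simp only [Prod.mk.injEq] at hab
    exact mul_left_cancel₀ (ne_of_gt hq) hab.1
  rw [latticeS, hset, Set.ncard_image_of_injective _ hinj]
  rw [show Set.Icc (1 : ℤ) ⌊R / s⌋ = ↑(Finset.Icc (1 : ℤ) ⌊R / s⌋) by simp,
    Set.ncard_coe_finset, Int.card_Icc]
  omega

/-- Fix `α = p/q ∈ ℚ` with `q > 0` and `gcd(p,q) = 1`, and let `ε = ε_R` be a positive
function of `R` with `ε_R · R → 0` as `R → ∞`. Then `S_α(ε,R) = R/√(p²+q²) + O(1)`. -/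
theorem rational_fast_shrinking (p q : ℤ) (hq : 0 < q) (hpq : Int.gcd p q = 1)
    (ε : ℝ → ℝ) (hεpos : ∀ R, 0 < ε R)
    (hεR : Tendsto (fun R => ε R * R) atTop (nhds 0)) :
    (fun R => (latticeS ((p : ℝ) / q) (ε R) R : ℝ) -
        R / Real.sqrt ((p : ℝ) ^ 2 + (q : ℝ) ^ 2))
      =O[atTop] fun _ : ℝ => (1 : ℝ) := by
  have hq0 : (0 : ℝ) < (q : ℝ) := by exact_mod_cast hq
  have hsum : (0 : ℝ) < (p : ℝ) ^ 2 + (q : ℝ) ^ 2 := by positivity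
  have hs : 0 < Real.sqrt ((p : ℝ) ^ 2 + (q : ℝ) ^ 2) := Real.sqrt_pos.mpr hsum
  rw [Asymptotics.isBigO_iff]
  refine ⟨1, ?_⟩
  have hev : ∀ᶠ R in atTop, ε R * R < (q : ℝ)⁻¹ :=
    hεR.eventually_lt_const (by positivity)
  simp only [norm_one, mul_one, Real.norm_eq_abs]
  filter_upwards [hev, eventually_ge_atTop (1 : ℝ)] with R h1 hR
  have h1' : (q : ℝ) * (ε R * R) < 1 := by
    have h2 := mul_lt_mul_of_pos_left h1 hq0
    rwa [mul_inv_cancel₀ (ne_of_gt hq0)] at h2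
  rw [latticeS_eq_s8 p q hq hpq (ε R) R (hεpos R) hR h1']
  set x := R / Real.sqrt ((p : ℝ) ^ 2 + (q : ℝ) ^ 2) with hx_def
  have hx : 0 ≤ x := div_nonneg (by linarith) hs.le
  have hcast : ((⌊x⌋.toNat : ℕ) : ℝ) = (⌊x⌋ : ℝ) := by
    exact_mod_cast congrArg (Int.cast : ℤ → ℝ) (Int.toNat_of_nonneg (Int.floor_nonneg.mpr hx))
  rw [hcast, abs_le]
  constructor
  · linarith [Int.lt_floor_add_one x]
  · linarith [Int.floor_le x]
end

section
/- Let α ∈ ℝ be irrational of finite type η, and let ε = ε_R be a positive function of R with ε_R·R^{1+η} → 0 as R → ∞. Then there exists R₀ > 0 such that for all R > R₀, S_α(ε,R) = 0. -/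
open Filter Real

/-- Let `α` be irrational of finite type `η`, and let `ε = ε_R` be a positive function
of `R` with `ε_R · R^{1+η} → 0` as `R → ∞`. Then there exists `R₀ > 0` such that for
all `R > R₀`, `S_α(ε,R) = 0`. -/
theorem quickly_shrinking (α η : ℝ) (hα : Irrational α)
    (htype : ∃ c > 0, ∀ p q : ℤ, 0 < q → c / (q : ℝ) ^ (1 + η) < |α - (p : ℝ) / q|)
    (ε : ℝ → ℝ) (hεpos : ∀ R, 0 < ε R)
    (hεR : Tendsto (fun R => ε R * R ^ (1 + η)) atTop (nhds 0)) :
    ∃ R₀ > (0 : ℝ), ∀ R > R₀, latticeS α (ε R) R = 0 := by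
  obtain ⟨c, hc, hty⟩ := htype
  by_cases hη : 0 ≤ 1 + η
  · have hev := Metric.tendsto_nhds.mp hεR c hc
    rw [Filter.eventually_atTop] at hev
    obtain ⟨R₁, hR₁⟩ := hev
    refine ⟨max R₁ 1, lt_of_lt_of_le one_pos (le_max_right _ _), ?_⟩
    intro R hR
    have hR1 : (1:ℝ) < R := lt_of_le_of_lt (le_max_right _ _) hR
    have hsmall : ε R * R ^ (1+η) < c := by
      have h := hR₁ R (le_of_lt (lt_of_le_of_lt (le_max_left _ _) hR))
      rw [Real.dist_eq, sub_zero] at h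
      calc ε R * R ^ (1+η) ≤ |ε R * R ^ (1+η)| := le_abs_self _
        _ < c := h
    have hset : {x : ℤ × ℤ | 1 ≤ x.1 ∧ (x.1 : ℝ) ^ 2 + (x.2 : ℝ) ^ 2 ≤ R ^ 2 ∧
        |(x.2 : ℝ) - α * x.1| < x.1 * ε R} = ∅ := by
      ext ⟨m, n⟩
      simp only [Set.mem_setOf_eq, Set.mem_empty_iff_false, iff_false]
      rintro ⟨hm, hcirc, hsec⟩
      have hm0 : (0:ℤ) < m := hm
      have hmR : (1:ℝ) ≤ (m:ℝ) := by exact_mod_cast hm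
      have hmpos : (0:ℝ) < (m:ℝ) := lt_of_lt_of_le one_pos hmR
      have hmle : (m:ℝ) ≤ R := by nlinarith [sq_nonneg ((n:ℝ))]
      have h1 := hty n m hm0
      have heq : |α - (n:ℝ)/m| = |(n:ℝ) - α * m| / m := by
        rw [abs_sub_comm]
        rw [show (n:ℝ)/m - α = ((n:ℝ) - α * m)/m by field_simp]
        rw [abs_div, abs_of_pos hmpos]
      rw [heq, div_lt_div_iff₀ (Real.rpow_pos_of_pos hmpos _) hmpos] at h1
      -- h1 : c * m < |n - αm| * m^(1+η)
      have h2 : |(n:ℝ) - α * m| * (m:ℝ)^(1+η) < ((m:ℝ) * ε R) * (m:ℝ)^(1+η) :=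
        mul_lt_mul_of_pos_right hsec (Real.rpow_pos_of_pos hmpos _)
      have h3 : (m:ℝ)^(1+η) ≤ R^(1+η) :=
        Real.rpow_le_rpow (le_of_lt hmpos) hmle hη
      have h4 : ((m:ℝ) * ε R) * (m:ℝ)^(1+η) ≤ (ε R * R^(1+η)) * m := by
        have h5 := mul_le_mul_of_nonneg_left h3 (le_of_lt (hεpos R))
        nlinarith [hεpos R]
      nlinarith
    rw [latticeS, hset, Set.ncard_empty]
  · exfalso
    push_neg at hη
    obtain ⟨N, hN⟩ := exists_nat_gt (1/c)
    set q : ℤ := (N : ℤ) + 1 with hqdef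
    have hq0 : (0:ℤ) < q := by positivity
    have hq1 : (1:ℝ) ≤ (q:ℝ) := by exact_mod_cast hq0
    have hqpos : (0:ℝ) < (q:ℝ) := lt_of_lt_of_le one_pos hq1
    have hNq : (1:ℝ)/c < (q:ℝ) := by
      refine lt_of_lt_of_le hN ?_
      rw [hqdef]
      push_cast
      linarith
    have hqc : 1/(q:ℝ) < c := by
      rw [div_lt_iff₀ hqpos]
      rw [div_lt_iff₀ hc] at hNq
      linarith
    set p : ℤ := ⌊α * q⌋ with hpdef
    have hfr0 : 0 ≤ α * q - (p:ℝ) := by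
      have := Int.floor_le (α * q); linarith
    have hfr1 : α * q - (p:ℝ) < 1 := by
      have := Int.lt_floor_add_one (α * q); linarith
    have habs : |α - (p:ℝ)/q| < 1/(q:ℝ) := by
      rw [show α - (p:ℝ)/q = (α * q - p)/q by field_simp]
      rw [abs_div, abs_of_pos hqpos, abs_of_nonneg hfr0]
      rw [div_lt_div_iff₀ hqpos hqpos]
      nlinarith
    have hty' := hty p q hq0
    -- show 1/q ≤ c/q^(1+η)
    have hqη : (q:ℝ)^η ≤ 1/(q:ℝ) := by
      have h6 : (q:ℝ)^η ≤ (q:ℝ)^(-1:ℝ) :=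
        Real.rpow_le_rpow_of_exponent_le hq1 (by linarith)
      rwa [Real.rpow_neg_one, inv_eq_one_div] at h6
    have hpow : (q:ℝ)^(1+η) ≤ c * q := by
      rw [Real.rpow_add hqpos, Real.rpow_one]
      calc (q:ℝ) * (q:ℝ)^η ≤ (q:ℝ) * (1/(q:ℝ)) :=
            mul_le_mul_of_nonneg_left hqη (le_of_lt hqpos)
        _ = 1 := by field_simp
        _ ≤ c * q := by
              have h1cq : 1 < c * q := (div_lt_iff₀ hqpos).mp hqc
              linarith
    have hle : 1/(q:ℝ) ≤ c/(q:ℝ)^(1+η) := by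
      rw [div_le_div_iff₀ hqpos (Real.rpow_pos_of_pos hqpos _)]
      linarith
    linarith
end

section
/- Fix α ∈ ℝ, and let ε = ε_R be a positive function of R with ε_R → 0 as R → ∞. Then, as R → ∞, S_α(ε,R) = Δ_α(ε,R) + O(1 + (Rε)²), with implied constant depending only on α. -/
open Filter Real

/-- `latticeT α ε R` is the triangle count `Δ_α(ε, R)`: the number of lattice points
`(m, n)` with `1 ≤ m ≤ R/√(1+α²)` and `m(α-ε) < n < m(α+ε)`. -/
noncomputable def latticeT (α ε R : ℝ) : ℕ :=
  ∑ m ∈ Finset.Icc 1 ⌊R / Real.sqrt (1 + α ^ 2)⌋,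
    Set.ncard {n : ℤ | (m : ℝ) * (α - ε) < n ∧ (n : ℝ) < m * (α + ε)}

private lemma sqrt_lip {s t : ℝ} (ht : 0 ≤ t) (hts : t ≤ s) :
    1 / Real.sqrt (1 + t ^ 2) - 1 / Real.sqrt (1 + s ^ 2) ≤ s - t := by
  set u := Real.sqrt (1 + t ^ 2) with hu
  set v := Real.sqrt (1 + s ^ 2) with hv
  have hu2 : u ^ 2 = 1 + t ^ 2 := Real.sq_sqrt (by positivity)
  have hv2 : v ^ 2 = 1 + s ^ 2 := Real.sq_sqrt (by positivity)
  have hu0 : 0 < u := Real.sqrt_pos.mpr (by positivity)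
  have hv0 : 0 < v := Real.sqrt_pos.mpr (by positivity)
  have hu1 : 1 ≤ u := by nlinarith
  have hv1 : 1 ≤ v := by nlinarith
  have hut : t ≤ u := by nlinarith
  have hvs : s ≤ v := by nlinarith
  have huv : u ≤ v := by nlinarith
  have h2 : v - u ≤ s - t := by nlinarith
  have h1 : 1 / u - 1 / v = (v - u) / (u * v) := by field_simp
  rw [h1]
  have huv1 : 1 ≤ u * v := by nlinarith
  calc (v - u) / (u * v) ≤ v - u := div_le_self (by linarith) huv1
      _ ≤ s - t := h2

private lemma card_Ioo_le {a b : ℝ} (hab : a ≤ b) :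
    ((Finset.Ioo ⌊a⌋ ⌈b⌉).card : ℝ) ≤ b - a + 1 := by
  rw [Int.card_Ioo]
  rcases le_or_gt (⌈b⌉ - ⌊a⌋ - 1) 0 with h | h
  · rw [Int.toNat_of_nonpos h]
    push_cast
    linarith
  · have hc : (((⌈b⌉ - ⌊a⌋ - 1).toNat : ℤ) : ℝ) = ((⌈b⌉ - ⌊a⌋ - 1 : ℤ) : ℝ) := by
      exact_mod_cast congrArg (fun z : ℤ => (z : ℝ)) (Int.toNat_of_nonneg h.le)
    have h1 : ((⌈b⌉ : ℝ)) < b + 1 := Int.ceil_lt_add_one b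
    have h2 : a - 1 < (⌊a⌋ : ℝ) := Int.sub_one_lt_floor a
    push_cast at hc ⊢
    rw [hc]
    linarith

private lemma setIoo_eq (α e : ℝ) (m : ℤ) :
    {n : ℤ | (m : ℝ) * (α - e) < n ∧ (n : ℝ) < m * (α + e)}
      = ↑(Finset.Ioo ⌊(m : ℝ) * (α - e)⌋ ⌈(m : ℝ) * (α + e)⌉) := by
  ext n
  simp [Int.floor_lt, Int.lt_ceil]

private lemma ang_iff (α e : ℝ) (m n : ℤ) (hm : 1 ≤ m) :
    |(n : ℝ) - α * m| < m * e ↔ ((m : ℝ) * (α - e) < n ∧ (n : ℝ) < m * (α + e)) := by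
  have hm' : (1 : ℝ) ≤ (m : ℝ) := by exact_mod_cast hm
  rw [abs_lt]
  have e1 : (m : ℝ) * (α - e) = α * m - m * e := by ring
  have e2 : (m : ℝ) * (α + e) = α * m + m * e := by ring
  constructor
  · rintro ⟨h1, h2⟩
    constructor <;> linarith
  · rintro ⟨h1, h2⟩
    constructor <;> linarith

private lemma final_num (x : ℝ) (hx : 0 ≤ x) : (2 * x + 1) * (2 * x + 1) ≤ 6 * (1 + x ^ 2) := by
  nlinarith [sq_nonneg (x - 1)]

private lemma cardIoo_le (α e R : ℝ) (he : 0 < e) (m : ℤ) (hm : 1 ≤ m) (hmR : (m : ℝ) ≤ R) :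
    ((Finset.Ioo ⌊(m : ℝ) * (α - e)⌋ ⌈(m : ℝ) * (α + e)⌉).card : ℝ) ≤ 2 * R * e + 1 := by
  have hm' : (1 : ℝ) ≤ (m : ℝ) := by exact_mod_cast hm
  have hab : (m : ℝ) * (α - e) ≤ (m : ℝ) * (α + e) :=
    mul_le_mul_of_nonneg_left (by linarith) (by linarith)
  have h := card_Ioo_le hab
  have h2 : (m : ℝ) * e ≤ R * e := mul_le_mul_of_nonneg_right hmR he.le
  calc ((Finset.Ioo ⌊(m : ℝ) * (α - e)⌋ ⌈(m : ℝ) * (α + e)⌉).card : ℝ)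
      ≤ (m : ℝ) * (α + e) - (m : ℝ) * (α - e) + 1 := h
    _ = 2 * ((m : ℝ) * e) + 1 := by ring
    _ ≤ 2 * R * e + 1 := by linarith

private lemma radial_all' (α e R M₁ : ℝ) (he : 0 < e)
    (hM1sq : M₁ ^ 2 * (1 + (|α| + e) ^ 2) = R ^ 2)
    (m n : ℤ) (hm : 1 ≤ m) (hmM : (m : ℝ) ≤ M₁)
    (h1 : (m : ℝ) * (α - e) < n) (h2 : (n : ℝ) < m * (α + e)) :
    (m : ℝ) ^ 2 + (n : ℝ) ^ 2 ≤ R ^ 2 := by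
  have hm' : (1 : ℝ) ≤ (m : ℝ) := by exact_mod_cast hm
  have hα1 : α ≤ |α| := le_abs_self α
  have hα2 : -|α| ≤ α := neg_abs_le α
  have hmul : (m : ℝ) * α ≤ m * |α| := mul_le_mul_of_nonneg_left hα1 (by linarith)
  have hmul2 : (m : ℝ) * (-|α|) ≤ m * α := mul_le_mul_of_nonneg_left hα2 (by linarith)
  have hub : (n : ℝ) < m * (|α| + e) := by nlinarith
  have hlb : -((m : ℝ) * (|α| + e)) < n := by nlinarith
  have hn2 : (n : ℝ) ^ 2 ≤ ((m : ℝ) * (|α| + e)) ^ 2 := (sq_lt_sq' hlb hub).le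
  have hm2 : (m : ℝ) ^ 2 ≤ M₁ ^ 2 := by nlinarith
  nlinarith [mul_le_mul_of_nonneg_right hm2
    (show (0 : ℝ) ≤ 1 + (|α| + e) ^ 2 by positivity)]

private lemma radial_none' (α e R M₂ : ℝ) (he : 0 < e) (hM2pos : 0 < M₂)
    (hM2sq : M₂ ^ 2 * (1 + (max (|α| - e) 0) ^ 2) = R ^ 2)
    (m n : ℤ) (hmM : M₂ < m) (h1 : (m : ℝ) * (α - e) < n) (h2 : (n : ℝ) < m * (α + e)) :
    ¬ ((m : ℝ) ^ 2 + (n : ℝ) ^ 2 ≤ R ^ 2) := by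
  set c := max (|α| - e) 0 with hc
  have hm0 : (0 : ℝ) < m := hM2pos.trans hmM
  have hc0 : 0 ≤ c := le_max_right _ _
  have hnt : (m : ℝ) ^ 2 * c ^ 2 ≤ (n : ℝ) ^ 2 := by
    by_cases hαe : e < |α|
    · have hcv : c = |α| - e := max_eq_left (by linarith)
      rcases le_or_gt 0 α with hα | hα
      · have habs : |α| = α := abs_of_nonneg hα
        have hlt : (m : ℝ) * c < n := by rw [hcv, habs]; linarith [h1]
        have hpos : 0 < (m : ℝ) * c := mul_pos hm0 (by rw [hcv, habs]; rw [habs] at hαe; linarith)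
        nlinarith
      · have habs : |α| = -α := abs_of_neg hα
        have hlt : (n : ℝ) < -((m : ℝ) * c) := by rw [hcv, habs]; nlinarith
        have hpos : 0 < (m : ℝ) * c := mul_pos hm0 (by rw [hcv, habs]; rw [habs] at hαe; linarith)
        nlinarith
    · have hcv : c = 0 := max_eq_right (by push_neg at hαe; linarith)
      rw [hcv]
      nlinarith [sq_nonneg (n : ℝ)]
  intro hcon
  have hm2 : M₂ ^ 2 < (m : ℝ) ^ 2 := by nlinarith
  nlinarith [mul_lt_mul_of_pos_right hm2 (show (0 : ℝ) < 1 + c ^ 2 by positivity)]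

set_option maxHeartbeats 1000000 in
private lemma key (α e R : ℝ) (he : 0 < e) (hR : 1 ≤ R) :
    |(latticeS α e R : ℝ) - (latticeT α e R : ℝ)| ≤ 6 * (1 + (R * e) ^ 2) := by
  classical
  have hR0 : 0 < R := by linarith
  set s := |α| + e with hs
  set t := max (|α| - e) 0 with ht
  have ht0 : 0 ≤ t := le_max_right _ _
  have hta : t ≤ |α| := max_le (by linarith) (abs_nonneg α)
  have hαs : |α| ≤ s := by rw [hs]; linarith
  have hts : t ≤ s := hta.trans hαs
  have hs0 : 0 < s := lt_of_lt_of_le he (by rw [hs]; linarith [abs_nonneg α])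
  have hst : s - t ≤ 2 * e := by
    have h : |α| - e ≤ t := le_max_left _ _
    linarith [hs.le, hs.ge]
  set M := R / Real.sqrt (1 + α ^ 2) with hM
  set M₁ := R / Real.sqrt (1 + s ^ 2) with hM1
  set M₂ := R / Real.sqrt (1 + t ^ 2) with hM2
  have sqα : 1 ≤ Real.sqrt (1 + α ^ 2) := by
    have h := Real.sqrt_le_sqrt (show (1:ℝ) ≤ 1 + α ^ 2 by nlinarith [sq_nonneg α])
    rwa [Real.sqrt_one] at h
  have sqs : 1 ≤ Real.sqrt (1 + s ^ 2) := by
    have h := Real.sqrt_le_sqrt (show (1:ℝ) ≤ 1 + s ^ 2 by nlinarith)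
    rwa [Real.sqrt_one] at h
  have sqt : 1 ≤ Real.sqrt (1 + t ^ 2) := by
    have h := Real.sqrt_le_sqrt (show (1:ℝ) ≤ 1 + t ^ 2 by nlinarith)
    rwa [Real.sqrt_one] at h
  have sqts : Real.sqrt (1 + t ^ 2) ≤ Real.sqrt (1 + α ^ 2) := by
    apply Real.sqrt_le_sqrt
    nlinarith [abs_nonneg α, sq_abs α]
  have sqαs : Real.sqrt (1 + α ^ 2) ≤ Real.sqrt (1 + s ^ 2) := by
    apply Real.sqrt_le_sqrt
    nlinarith [abs_nonneg α, sq_abs α]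
  have hM2R : M₂ ≤ R := by
    rw [hM2]
    calc R / Real.sqrt (1 + t ^ 2) ≤ R / 1 := by gcongr
      _ = R := by ring
  have hM1M : M₁ ≤ M := by rw [hM1, hM]; gcongr
  have hMM2 : M ≤ M₂ := by rw [hM2, hM]; gcongr
  have hMR : M ≤ R := hMM2.trans hM2R
  have hM1pos : 0 < M₁ := by rw [hM1]; positivity
  have hM2pos : 0 < M₂ := hM1pos.trans_le (hM1M.trans hMM2)
  have hM1sq : M₁ ^ 2 * (1 + s ^ 2) = R ^ 2 := by
    rw [hM1, div_pow, Real.sq_sqrt (by positivity)]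
    field_simp
  have hM2sq : M₂ ^ 2 * (1 + t ^ 2) = R ^ 2 := by
    rw [hM2, div_pow, Real.sq_sqrt (by positivity)]
    field_simp
  have hM2M1 : M₂ - M₁ ≤ 2 * R * e := by
    have h := sqrt_lip ht0 hts
    have : M₂ - M₁ = R * (1 / Real.sqrt (1 + t ^ 2) - 1 / Real.sqrt (1 + s ^ 2)) := by
      rw [hM1, hM2]; ring
    rw [this]
    calc R * (1 / Real.sqrt (1 + t ^ 2) - 1 / Real.sqrt (1 + s ^ 2)) ≤ R * (s - t) :=
          mul_le_mul_of_nonneg_left h hR0.le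
      _ ≤ R * (2 * e) := mul_le_mul_of_nonneg_left hst hR0.le
      _ = 2 * R * e := by ring
  set lo : ℤ → ℤ := fun m => ⌊(m : ℝ) * (α - e)⌋ with hlo
  set hi : ℤ → ℤ := fun m => ⌈(m : ℝ) * (α + e)⌉ with hhi
  have setIoo : ∀ m : ℤ, {n : ℤ | (m : ℝ) * (α - e) < n ∧ (n : ℝ) < m * (α + e)}
      = ↑(Finset.Ioo (lo m) (hi m)) := fun m => setIoo_eq α e m
  have ang : ∀ m n : ℤ, 1 ≤ m →
      (|(n : ℝ) - α * m| < m * e ↔ ((m : ℝ) * (α - e) < n ∧ (n : ℝ) < m * (α + e))) :=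
    fun m n hm => ang_iff α e m n hm
  set F : Finset (ℤ × ℤ) := (Finset.Icc 1 ⌊R⌋).biUnion
      (fun m => ({m} : Finset ℤ) ×ˢ ((Finset.Ioo (lo m) (hi m)).filter
        (fun n : ℤ => (m : ℝ) ^ 2 + (n : ℝ) ^ 2 ≤ R ^ 2))) with hF
  have hSset : {x : ℤ × ℤ | 1 ≤ x.1 ∧ (x.1 : ℝ) ^ 2 + (x.2 : ℝ) ^ 2 ≤ R ^ 2 ∧
      |(x.2 : ℝ) - α * x.1| < x.1 * e} = ↑F := by
    ext ⟨m, n⟩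
    simp only [Set.mem_setOf_eq, Finset.coe_biUnion, Finset.mem_coe, Finset.mem_Icc,
      Set.mem_iUnion, Finset.mem_product, Finset.mem_singleton, Finset.mem_filter,
      Finset.mem_Ioo, hF]
    constructor
    · rintro ⟨h1, h2, h3⟩
      have hm' : (1 : ℝ) ≤ (m : ℝ) := by exact_mod_cast h1
      have hang := (ang m n h1).mp h3
      refine ⟨m, ⟨h1, ?_⟩, rfl, ⟨Int.floor_lt.mpr hang.1, Int.lt_ceil.mpr hang.2⟩, h2⟩
      apply Int.le_floor.mpr
      nlinarith [sq_nonneg (n : ℝ)]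
    · rintro ⟨m', hm', rfl, hn, hrad⟩
      exact ⟨hm'.1, hrad, (ang _ n hm'.1).mpr ⟨Int.floor_lt.mp hn.1, Int.lt_ceil.mp hn.2⟩⟩
  have hScard : (latticeS α e R : ℝ) = ∑ m ∈ Finset.Icc 1 ⌊R⌋,
      (((Finset.Ioo (lo m) (hi m)).filter
        (fun n : ℤ => (m : ℝ) ^ 2 + (n : ℝ) ^ 2 ≤ R ^ 2)).card : ℝ) := by
    have hdisj : ∀ x ∈ Finset.Icc 1 ⌊R⌋, ∀ y ∈ Finset.Icc 1 ⌊R⌋, x ≠ y →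
        Disjoint (({x} : Finset ℤ) ×ˢ ((Finset.Ioo (lo x) (hi x)).filter
          (fun n : ℤ => (x : ℝ) ^ 2 + (n : ℝ) ^ 2 ≤ R ^ 2)))
          (({y} : Finset ℤ) ×ˢ ((Finset.Ioo (lo y) (hi y)).filter
          (fun n : ℤ => (y : ℝ) ^ 2 + (n : ℝ) ^ 2 ≤ R ^ 2))) := by
      intro x _ y _ hxy
      simp only [Finset.disjoint_left, Finset.mem_product, Finset.mem_singleton]
      rintro ⟨a, b⟩ ⟨rfl, -⟩ ⟨h, -⟩
      exact hxy h
    rw [show latticeS α e R = F.card by rw [latticeS, hSset, Set.ncard_coe_finset],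
      hF, Finset.card_biUnion hdisj]
    push_cast
    refine Finset.sum_congr rfl fun m _ => ?_
    rw [Finset.card_product, Finset.card_singleton, one_mul]
  have hTcard : (latticeT α e R : ℝ) = ∑ m ∈ Finset.Icc 1 ⌊M⌋,
      ((Finset.Ioo (lo m) (hi m)).card : ℝ) := by
    simp only [latticeT, ← hM]
    push_cast
    refine Finset.sum_congr rfl fun m _ => ?_
    rw [setIoo m, Set.ncard_coe_finset]
  have hKA : Finset.Icc 1 ⌊M⌋ ⊆ Finset.Icc 1 ⌊R⌋ :=
    Finset.Icc_subset_Icc_right (Int.floor_le_floor hMR)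
  set J := Finset.Ioc ⌊M₁⌋ ⌊M₂⌋ with hJ
  set B : ℝ := 2 * R * e + 1 with hB
  have hB0 : 0 < B := by rw [hB]; positivity
  have hTA : (latticeT α e R : ℝ) = ∑ m ∈ Finset.Icc 1 ⌊R⌋,
      (if m ∈ Finset.Icc 1 ⌊M⌋ then ((Finset.Ioo (lo m) (hi m)).card : ℝ) else 0) := by
    rw [hTcard, Finset.sum_ite_mem, Finset.inter_eq_right.mpr hKA]
  have hterm : ∀ m ∈ Finset.Icc 1 ⌊R⌋,
      |(((Finset.Ioo (lo m) (hi m)).filter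
          (fun n : ℤ => (m : ℝ) ^ 2 + (n : ℝ) ^ 2 ≤ R ^ 2)).card : ℝ)
        - (if m ∈ Finset.Icc 1 ⌊M⌋ then ((Finset.Ioo (lo m) (hi m)).card : ℝ) else 0)|
      ≤ (if m ∈ J then B else 0) := by
    intro m hm
    rw [Finset.mem_Icc] at hm
    by_cases hmJ : m ∈ J
    · rw [if_pos hmJ]
      rw [hJ, Finset.mem_Ioc] at hmJ
      have hmM2 : (m : ℝ) ≤ M₂ := le_trans (by exact_mod_cast hmJ.2) (Int.floor_le M₂)
      have hmR : (m : ℝ) ≤ R := hmM2.trans hM2R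
      have hcard : ((Finset.Ioo (lo m) (hi m)).card : ℝ) ≤ B := by
        rw [hB]
        simp only [hlo, hhi]
        exact cardIoo_le α e R he m hm.1 hmR
      have hfil : (((Finset.Ioo (lo m) (hi m)).filter
          (fun n : ℤ => (m : ℝ) ^ 2 + (n : ℝ) ^ 2 ≤ R ^ 2)).card : ℝ)
          ≤ ((Finset.Ioo (lo m) (hi m)).card : ℝ) := by
        exact_mod_cast Finset.card_le_card (Finset.filter_subset _ _)
      have hfil0 : (0 : ℝ) ≤ (((Finset.Ioo (lo m) (hi m)).filter
          (fun n : ℤ => (m : ℝ) ^ 2 + (n : ℝ) ^ 2 ≤ R ^ 2)).card : ℝ) := by positivity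
      rw [abs_le]
      split_ifs with h
      · constructor <;> linarith
      · constructor <;> linarith
    · rw [if_neg hmJ]
      rw [hJ, Finset.mem_Ioc, not_and_or, not_lt, not_le] at hmJ
      rcases hmJ with hmJ | hmJ
      · -- m ≤ ⌊M₁⌋ : the two counts agree
        have hmM1 : (m : ℝ) ≤ M₁ := le_trans (by exact_mod_cast hmJ) (Int.floor_le M₁)
        have hmemK : m ∈ Finset.Icc 1 ⌊M⌋ :=
          Finset.mem_Icc.mpr ⟨hm.1, Int.le_floor.mpr (hmM1.trans hM1M)⟩
        have hrad : ∀ n ∈ Finset.Ioo (lo m) (hi m),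
            (m : ℝ) ^ 2 + (n : ℝ) ^ 2 ≤ R ^ 2 := by
          intro n hn
          rw [Finset.mem_Ioo] at hn
          have h1 : (m : ℝ) * (α - e) < n := Int.floor_lt.mp (by simpa [hlo] using hn.1)
          have h2 : (n : ℝ) < m * (α + e) := Int.lt_ceil.mp (by simpa [hhi] using hn.2)
          exact radial_all' α e R M₁ he (by rw [← hs]; exact hM1sq) m n hm.1 hmM1 h1 h2
        rw [Finset.filter_true_of_mem hrad, if_pos hmemK, sub_self, abs_zero]
      · -- M₂ < m : both counts vanish
        have hmM2 : M₂ < (m : ℝ) := Int.floor_lt.mp hmJ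
        have hnrad : ∀ n ∈ Finset.Ioo (lo m) (hi m),
            ¬ ((m : ℝ) ^ 2 + (n : ℝ) ^ 2 ≤ R ^ 2) := by
          intro n hn
          rw [Finset.mem_Ioo] at hn
          have h1 : (m : ℝ) * (α - e) < n := Int.floor_lt.mp (by simpa [hlo] using hn.1)
          have h2 : (n : ℝ) < m * (α + e) := Int.lt_ceil.mp (by simpa [hhi] using hn.2)
          exact radial_none' α e R M₂ he hM2pos (by rw [← ht]; exact hM2sq) m n hmM2 h1 h2
        have hnotK : m ∉ Finset.Icc 1 ⌊M⌋ := by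
          rw [Finset.mem_Icc]
          rintro ⟨-, hle⟩
          have : (m : ℝ) ≤ M := le_trans (by exact_mod_cast hle) (Int.floor_le M)
          linarith [hMM2]
        rw [Finset.filter_false_of_mem hnrad, if_neg hnotK]
        simp
  have hJcard : ((J.card : ℕ) : ℝ) ≤ B := by
    rw [hJ, Int.card_Ioc]
    rcases le_or_gt (⌊M₂⌋ - ⌊M₁⌋) 0 with h | h
    · rw [Int.toNat_of_nonpos h]
      simpa using hB0.le
    · have hc : (((⌊M₂⌋ - ⌊M₁⌋).toNat : ℤ) : ℝ) = ((⌊M₂⌋ - ⌊M₁⌋ : ℤ) : ℝ) := by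
        exact_mod_cast congrArg (fun z : ℤ => (z : ℝ)) (Int.toNat_of_nonneg h.le)
      have h1 : (⌊M₂⌋ : ℝ) ≤ M₂ := Int.floor_le M₂
      have h2 : M₁ - 1 < (⌊M₁⌋ : ℝ) := Int.sub_one_lt_floor M₁
      push_cast at hc ⊢
      rw [hc, hB]
      push_cast
      linarith [hM2M1]
  calc |(latticeS α e R : ℝ) - (latticeT α e R : ℝ)|
      = |∑ m ∈ Finset.Icc 1 ⌊R⌋,
          ((((Finset.Ioo (lo m) (hi m)).filter
            (fun n : ℤ => (m : ℝ) ^ 2 + (n : ℝ) ^ 2 ≤ R ^ 2)).card : ℝ)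
          - (if m ∈ Finset.Icc 1 ⌊M⌋ then ((Finset.Ioo (lo m) (hi m)).card : ℝ) else 0))| := by
        rw [hScard, hTA, Finset.sum_sub_distrib]
    _ ≤ ∑ m ∈ Finset.Icc 1 ⌊R⌋,
          |(((Finset.Ioo (lo m) (hi m)).filter
            (fun n : ℤ => (m : ℝ) ^ 2 + (n : ℝ) ^ 2 ≤ R ^ 2)).card : ℝ)
          - (if m ∈ Finset.Icc 1 ⌊M⌋ then ((Finset.Ioo (lo m) (hi m)).card : ℝ) else 0)| :=
        Finset.abs_sum_le_sum_abs _ _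
    _ ≤ ∑ m ∈ Finset.Icc 1 ⌊R⌋, (if m ∈ J then B else 0) := Finset.sum_le_sum hterm
    _ = ∑ m ∈ Finset.Icc 1 ⌊R⌋ ∩ J, B := Finset.sum_ite_mem _ _ _
    _ = ((Finset.Icc 1 ⌊R⌋ ∩ J).card : ℝ) * B := by rw [Finset.sum_const, nsmul_eq_mul]
    _ ≤ ((J.card : ℕ) : ℝ) * B := by
        have h : (Finset.Icc 1 ⌊R⌋ ∩ J).card ≤ J.card :=
          Finset.card_le_card Finset.inter_subset_right
        exact mul_le_mul_of_nonneg_right (by exact_mod_cast h) hB0.le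
    _ ≤ B * B := mul_le_mul_of_nonneg_right hJcard hB0.le
    _ ≤ 6 * (1 + (R * e) ^ 2) := by
        rw [hB]
        have := final_num (R * e) (by positivity)
        calc (2 * R * e + 1) * (2 * R * e + 1)
            = (2 * (R * e) + 1) * (2 * (R * e) + 1) := by ring
          _ ≤ 6 * (1 + (R * e) ^ 2) := this

/-- Fix `α ∈ ℝ`, and let `ε = ε_R` be a positive function of `R` with `ε_R → 0` as
`R → ∞`. Then `S_α(ε,R) = Δ_α(ε,R) + O(1 + (Rε)²)`. -/
theorem S_and_Delta (α : ℝ) (ε : ℝ → ℝ) (hεpos : ∀ R, 0 < ε R)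
    (hε0 : Tendsto ε atTop (nhds 0)) :
    (fun R => (latticeS α (ε R) R : ℝ) - (latticeT α (ε R) R : ℝ))
      =O[atTop] fun R => 1 + (R * ε R) ^ 2 := by
  rw [Asymptotics.isBigO_iff]
  refine ⟨6, ?_⟩
  filter_upwards [eventually_ge_atTop (1 : ℝ)] with R hR
  have h := key α (ε R) R (hεpos R) hR
  have hpos : (0 : ℝ) ≤ 1 + (R * ε R) ^ 2 := by positivity
  rw [Real.norm_eq_abs, Real.norm_eq_abs, abs_of_nonneg hpos]
  exact h
end

section
/- Fix α ∈ ℝ. There is a constant K = K(α) > 0 such that the following holds: for all R ≥ 1, all ε > 0, and all coprime integers p, q with q > 0 such that δ := α − p/q satisfies |δ| < ε/2, the quantity Δ⁺ := Σ_{0 < d ≤ (ε+δ)Rq/√(1+α²)} #{m ∈ ℤ : d/((ε+δ)q) < m ≤ R/√(1+α²), m ≡ −d·p̄ (mod q)}, where p̄ denotes a multiplicative inverse of p modulo q, satisfies |Δ⁺ − (1/2)·(ε+δ)·R²/(1+α²)| ≤ K·(R/q + 1/(εq²) + εqR). -/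
/-!
Put `c = (ε + δ) q` and `B = R / √(1 + α²)`. For each `d` with `0 < d ≤ cB`, the admissible `m`
form one residue class modulo `q` in the interval `(d / c, B]`, so there are `(B - d / c) / q` of
them up to an error of at most `2`. Summing over the `⌊cB⌋` values of `d` costs `O(cB) = O(εqR)`,
and `∑ (B - d / c) / q` is a Riemann sum for the triangle of area `cB² / 2`, scaled by `1 / q`,
which it matches up to `O(B / q + 1 / (cq))`.
-/

open Filter Real

/-- `DeltaPlus α ε R p q pbar` counts pairs `(d, m)` of integers with
`0 < d ≤ (ε+δ)Rq/√(1+α²)`, `d/((ε+δ)q) < m ≤ R/√(1+α²)` and `m ≡ -d·p̄ (mod q)`,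
where `δ = α - p/q` and `p̄ = pbar` is a multiplicative inverse of `p` modulo `q`. -/
noncomputable def DeltaPlus (α ε R : ℝ) (p q pbar : ℤ) : ℕ :=
  Set.ncard {x : ℤ × ℤ |
    0 < x.1 ∧ (x.1 : ℝ) ≤ (ε + (α - (p : ℝ) / q)) * R * q / Real.sqrt (1 + α ^ 2) ∧
    (x.1 : ℝ) / ((ε + (α - (p : ℝ) / q)) * q) < x.2 ∧
    (x.2 : ℝ) ≤ R / Real.sqrt (1 + α ^ 2) ∧
    x.2 ≡ -(x.1 * pbar) [ZMOD q]}

open Finset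

lemma Set.ncard_setOf_mem_and_mem_eq_sum {α β : Type*} (s : Finset α) (t : α → Finset β) :
    {x : α × β | x.1 ∈ s ∧ x.2 ∈ t x.1}.ncard = ∑ a ∈ s, #(t a) := by
  have h : {x : α × β | x.1 ∈ s ∧ x.2 ∈ t x.1} =
      ((s.sigma t).map (Equiv.sigmaEquivProd α β).toEmbedding : Set (α × β)) := by
    ext ⟨a, b⟩; simp
  rw [h, Set.ncard_coe_finset, card_map, card_sigma]

namespace Int

lemma card_Ioc_zero_cast {R : Type*} [AddGroupWithOne R] {n : ℤ} (hn : 0 ≤ n) :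
    (#(Ioc 0 n) : R) = n := by
  rw [card_Ioc, sub_zero, ← cast_natCast, toNat_of_nonneg hn]

lemma sum_Ioc_zero_cast {K : Type*} [Field K] [CharZero K] {n : ℤ} (hn : 0 ≤ n) :
    ∑ d ∈ Ioc 0 n, (d : K) = n * (n + 1) / 2 := by
  induction n, hn using Int.leInduction with
  | base => simp
  | succ n hn ih =>
    rw [← insert_Ioc_right_eq_Ioc_add_one (by omega), sum_insert (by simp), ih]
    push_cast; ring

lemma abs_card_Ioc_filter_modEq_sub_le {a b : ℤ} (hab : a ≤ b) (v : ℤ) {q : ℤ} (hq : 0 < q) :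
    |(#{x ∈ Ioc a b | x ≡ v [ZMOD q]} : ℝ) - (b - a) / q| ≤ 1 := by
  have hq' : (0 : ℚ) < q := by exact_mod_cast hq
  have hfloor : ⌊(a - v) / (q : ℚ)⌋ ≤ ⌊(b - v) / (q : ℚ)⌋ := floor_le_floor (by gcongr)
  have hcard := Ioc_filter_modEq_card a b hq v
  rw [max_eq_left (sub_nonneg.2 hfloor)] at hcard
  have hdiff : (b - v) / (q : ℚ) - (a - v) / q = (b - a) / q := by ring
  have key : |((⌊(b - v) / (q : ℚ)⌋ - ⌊(a - v) / (q : ℚ)⌋ : ℤ) : ℚ) - (b - a) / q| ≤ 1 := by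
    rw [abs_le]; push_cast
    constructor <;> linarith [floor_le ((b - v) / (q : ℚ)), lt_floor_add_one ((b - v) / (q : ℚ)),
      floor_le ((a - v) / (q : ℚ)), lt_floor_add_one ((a - v) / (q : ℚ))]
  rw [← hcard] at key
  exact_mod_cast key

lemma abs_card_Ioc_floor_filter_modEq_sub_le {a b : ℝ} (hab : a ≤ b) (v : ℤ) {q : ℤ}
    (hq : 0 < q) : |(#{x ∈ Ioc ⌊a⌋ ⌊b⌋ | x ≡ v [ZMOD q]} : ℝ) - (b - a) / q| ≤ 2 := by
  have hq' : (1 : ℝ) ≤ q := by exact_mod_cast hq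
  have hint := abs_card_Ioc_filter_modEq_sub_le (floor_le_floor hab) v hq
  have hround : |(⌊b⌋ - ⌊a⌋ : ℝ) / q - (b - a) / q| ≤ 1 := by
    have hq0 : (0 : ℝ) < q := by linarith
    rw [← sub_div, abs_div, abs_of_pos hq0, div_le_one hq0, abs_le]
    constructor <;> linarith [floor_le b, lt_floor_add_one b, floor_le a, lt_floor_add_one a]
  calc _ ≤ _ := abs_sub_le _ ((⌊b⌋ - ⌊a⌋ : ℝ) / q) _
    _ ≤ 2 := by linarith

end Int

open Int in
lemma abs_sum_Ioc_floor_sub_div_sub_le {c B : ℝ} (hc : 0 < c) (hB : 0 ≤ B) :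
    |∑ d ∈ Ioc 0 ⌊c * B⌋, (B - d / c) - c * B ^ 2 / 2| ≤ 3 * B / 2 + 1 / (2 * c) := by
  set D := ⌊c * B⌋
  have hD0 : 0 ≤ D := floor_nonneg.2 (by positivity)
  have hD0' : (0 : ℝ) ≤ D := by exact_mod_cast hD0
  have hDle : (D : ℝ) ≤ c * B := floor_le _
  have hDgt : c * B < D + 1 := lt_floor_add_one _
  have hsum : ∑ d ∈ Ioc 0 D, (B - d / c) = D * B - D * (D + 1) / (2 * c) := by
    rw [sum_sub_distrib, sum_const, nsmul_eq_mul, card_Ioc_zero_cast hD0, ← sum_div,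
      sum_Ioc_zero_cast hD0]
    field_simp
  have hsq : |(D : ℝ) * (D + 1) - (c * B) ^ 2| ≤ c * B + 1 := by
    rw [abs_le]
    constructor <;> nlinarith [mul_self_le_mul_self hD0' hDle,
      mul_self_lt_mul_self (hD0'.trans hDle) hDgt]
  have hsplit : D * B - D * (D + 1) / (2 * c) - c * B ^ 2 / 2
      = (D - c * B) * B - (D * (D + 1) - (c * B) ^ 2) / (2 * c) := by
    field_simp; ring
  rw [hsum, hsplit]
  calc _ ≤ |(D - c * B) * B| + |(D * (D + 1) - (c * B) ^ 2) / (2 * c)| := abs_sub _ _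
    _ ≤ B + (c * B + 1) / (2 * c) := by
      rw [abs_mul, abs_of_nonneg hB, abs_div, abs_of_pos (by positivity : 0 < 2 * c)]
      gcongr
      exact mul_le_of_le_one_left hB (abs_le.2 ⟨by linarith, by linarith⟩)
    _ = 3 * B / 2 + 1 / (2 * c) := by field_simp; ring

lemma abs_ncard_triangle_modEq_sub_le {c B : ℝ} (hc : 0 < c) (hB : 0 ≤ B) {q : ℤ}
    (hq : 0 < q) (v : ℤ → ℤ) :
    |({x : ℤ × ℤ | 0 < x.1 ∧ (x.1 : ℝ) ≤ c * B ∧ (x.1 : ℝ) / c < x.2 ∧ (x.2 : ℝ) ≤ B ∧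
        x.2 ≡ v x.1 [ZMOD q]}.ncard : ℝ) - c * B ^ 2 / (2 * q)|
      ≤ 2 * c * B + (3 * B / 2 + 1 / (2 * c)) / q := by
  have hq0 : (0 : ℝ) < q := by exact_mod_cast hq
  set D := ⌊c * B⌋
  set fiber : ℤ → Finset ℤ := fun d ↦ {m ∈ Ioc ⌊d / c⌋ ⌊B⌋ | m ≡ v d [ZMOD q]}
  have hset : {x : ℤ × ℤ | 0 < x.1 ∧ (x.1 : ℝ) ≤ c * B ∧ (x.1 : ℝ) / c < x.2 ∧ (x.2 : ℝ) ≤ B ∧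
      x.2 ≡ v x.1 [ZMOD q]} = {x | x.1 ∈ Ioc 0 D ∧ x.2 ∈ fiber x.1} := by
    ext x; simp [fiber, D, Int.le_floor, Int.floor_lt, and_assoc]
  have hfiber : ∀ d ∈ Ioc 0 D, |(#(fiber d) : ℝ) - (B - d / c) / q| ≤ 2 := by
    intro d hd
    have hdc : (d : ℝ) / c ≤ B := by
      rw [div_le_iff₀ hc, mul_comm]; exact Int.le_floor.1 (mem_Ioc.1 hd).2
    exact Int.abs_card_Ioc_floor_filter_modEq_sub_le hdc (v d) hq
  have hcount : |∑ d ∈ Ioc 0 D, ((#(fiber d) : ℝ) - (B - d / c) / q)| ≤ 2 * c * B := by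
    calc _ ≤ ∑ d ∈ Ioc 0 D, |(#(fiber d) : ℝ) - (B - d / c) / q| := abs_sum_le_sum_abs _ _
      _ ≤ ∑ d ∈ Ioc 0 D, (2 : ℝ) := sum_le_sum hfiber
      _ ≤ 2 * c * B := by
        rw [sum_const, nsmul_eq_mul, Int.card_Ioc_zero_cast (Int.floor_nonneg.2 (by positivity))]
        linarith [Int.floor_le (c * B)]
  have hriemann : |(∑ d ∈ Ioc 0 D, (B - d / c)) / q - c * B ^ 2 / (2 * q)|
      ≤ (3 * B / 2 + 1 / (2 * c)) / q := by
    rw [show c * B ^ 2 / (2 * q) = c * B ^ 2 / 2 / q by ring, ← sub_div, abs_div, abs_of_pos hq0]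
    gcongr
    exact abs_sum_Ioc_floor_sub_div_sub_le hc hB
  rw [hset, Set.ncard_setOf_mem_and_mem_eq_sum, Nat.cast_sum]
  rw [sum_sub_distrib, ← sum_div] at hcount
  calc _ ≤ _ := abs_sub_le _ ((∑ d ∈ Ioc 0 D, (B - d / c)) / q) _
    _ ≤ _ := add_le_add hcount hriemann

/-- Fix `α ∈ ℝ`. There is `K = K(α) > 0` such that for all `R ≥ 1`, all `ε > 0`, and
all coprime integers `p, q` with `q > 0` such that `δ := α - p/q` satisfies `|δ| < ε/2`,
the quantity `Δ⁺` (counting pairs `(d, m)` with `0 < d ≤ (ε+δ)Rq/√(1+α²)`,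
`d/((ε+δ)q) < m ≤ R/√(1+α²)`, `m ≡ -d·p̄ (mod q)`, `p̄` an inverse of `p` mod `q`)
satisfies `|Δ⁺ - (1/2)(ε+δ)R²/(1+α²)| ≤ K·(R/q + 1/(εq²) + εqR)`. -/
theorem DeltaPlus_estimate (α : ℝ) :
    ∃ K > (0 : ℝ), ∀ R : ℝ, 1 ≤ R → ∀ ε : ℝ, 0 < ε →
      ∀ p q pbar : ℤ, 0 < q → Int.gcd p q = 1 → p * pbar ≡ 1 [ZMOD q] →
        |α - (p : ℝ) / q| < ε / 2 →
          |(DeltaPlus α ε R p q pbar : ℝ) -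
              1 / 2 * (ε + (α - (p : ℝ) / q)) * R ^ 2 / (1 + α ^ 2)| ≤
            K * (R / q + 1 / (ε * (q : ℝ) ^ 2) + ε * q * R) := by
  refine ⟨3, by norm_num, fun R hR ε hε p q pbar hq _ _ hδ => ?_⟩
  obtain ⟨hδl, hδu⟩ := abs_lt.1 hδ
  set e := ε + (α - (p : ℝ) / q)
  set s := √(1 + α ^ 2)
  have hq0 : (0 : ℝ) < q := by exact_mod_cast hq
  have he : ε / 2 < e := by linarith
  have heq : 0 < e * q := mul_pos (by linarith) hq0
  have hs : 1 ≤ s := one_le_sqrt.2 (by nlinarith [sq_nonneg α])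
  have hss : s ^ 2 = 1 + α ^ 2 := sq_sqrt (by positivity)
  have htriangle := abs_ncard_triangle_modEq_sub_le (c := e * q) (B := R / s)
    heq (by positivity) hq (fun d ↦ -(d * pbar))
  rw [show e * q * (R / s) = e * R * q / s by ring,
    show e * q * (R / s) ^ 2 / (2 * q) = 1 / 2 * e * R ^ 2 / (1 + α ^ 2) by
      rw [← hss]; field_simp] at htriangle
  refine htriangle.trans ?_
  have hRs : R / s ≤ R := div_le_self (by linarith) hs
  have hcols : e * q * (R / s) ≤ 3 / 2 * (ε * q * R) := by
    calc e * q * (R / s) ≤ (3 / 2 * ε) * q * R := by gcongr; linarith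
      _ = 3 / 2 * (ε * q * R) := by ring
  have hrows : R / s / q ≤ R / q := by gcongr
  have hcorner : 1 / (2 * (e * q)) / q ≤ 1 / (ε * q ^ 2) := by
    rw [div_div, one_div_le_one_div (by positivity) (by positivity)]
    nlinarith
  have hRq : 0 ≤ R / q := by positivity
  have hεq : 0 ≤ 1 / (ε * q ^ 2) := by positivity
  calc _ = 2 * (e * q * (R / s)) + 3 / 2 * (R / s / q) + 1 / (2 * (e * q)) / q := by ring
    _ ≤ _ := by linarith
end
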